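/- arXiv:0810.4700 — 5 statements merged into one kernel-verified Lean document; each statement's English description precedes it below -/
import Mathlib

section
/- Let μ and ν be finite measures on a measurable space Ω, let ε > 0, and let X ⊆ Ω be a measurable set with ν(X) > ε. Suppose |μ(A) − ν(A)| ≤ ε for all measurable A ⊆ X. Then the total variation distance between the conditional measures μ|_X and ν|_X is at most 2ε/ν(X). -/
open MeasureTheory

/-- The conditioning of a measure `μ` on a set `A`: `μ|_A (B) = μ(A ∩ B)/μ(A)`. -/
noncomputable def condOn {Ω : Type*} [MeasurableSpace Ω] (μ : Measure Ω) (A : Set Ω) :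
    Measure Ω := (μ A)⁻¹ • μ.restrict A

/-- If `|μ(A) − ν(A)| ≤ ε` for all measurable `A ⊆ X` and `ν(X) > ε`, then
`d_TV(μ|_X, ν|_X) ≤ 2ε/ν(X)`. -/
theorem stmt0 {Ω : Type*} [MeasurableSpace Ω] (μ ν : Measure Ω)
    [IsFiniteMeasure μ] [IsFiniteMeasure ν] (ε : ℝ) (hε : 0 < ε)
    (X : Set Ω) (hX : MeasurableSet X) (hνX : ENNReal.ofReal ε < ν X)
    (h : ∀ A : Set Ω, A ⊆ X → MeasurableSet A → |(μ A).toReal - (ν A).toReal| ≤ ε) :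
    ∀ B : Set Ω, MeasurableSet B →
      |((condOn μ X) B).toReal - ((condOn ν X) B).toReal| ≤ 2 * ε / (ν X).toReal := by
  intro B hB
  have hνfin : ν X ≠ ⊤ := measure_ne_top ν X
  have hμfin : μ X ≠ ⊤ := measure_ne_top μ X
  set n := (ν X).toReal with hn
  set m := (μ X).toReal with hm
  set a := (μ (B ∩ X)).toReal with ha
  set b := (ν (B ∩ X)).toReal with hb
  have hεn : ε < n := (ENNReal.ofReal_lt_iff_lt_toReal hε.le hνfin).mp hνX
  have hXX : -ε ≤ m - n ∧ m - n ≤ ε := abs_le.mp (h X subset_rfl hX)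
  have hAB : -ε ≤ a - b ∧ a - b ≤ ε :=
    abs_le.mp (h (B ∩ X) Set.inter_subset_right (hB.inter hX))
  have hmpos : 0 < m := by linarith [hXX.1]
  have hnpos : 0 < n := lt_trans hε hεn
  have ham : a ≤ m := by
    apply ENNReal.toReal_mono hμfin (measure_mono Set.inter_subset_right)
  have hbn : b ≤ n := by
    apply ENNReal.toReal_mono hνfin (measure_mono Set.inter_subset_right)
  have ha0 : 0 ≤ a := ENNReal.toReal_nonneg
  have hb0 : 0 ≤ b := ENNReal.toReal_nonneg
  have hμ0 : μ X ≠ 0 := by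
    intro h0
    rw [hm, h0] at hmpos
    simp at hmpos
  have hν0 : ν X ≠ 0 := by
    intro h0
    rw [hn, h0] at hnpos
    simp at hnpos
  have e1 : ((condOn μ X) B).toReal = a / m := by
    simp [condOn, Measure.smul_apply, Measure.restrict_apply hB, ENNReal.toReal_mul,
      ENNReal.toReal_inv, div_eq_mul_inv, mul_comm, ha, hm]
  have e2 : ((condOn ν X) B).toReal = b / n := by
    simp [condOn, Measure.smul_apply, Measure.restrict_apply hB, ENNReal.toReal_mul,
      ENNReal.toReal_inv, div_eq_mul_inv, mul_comm, hb, hn]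
  rw [e1, e2, abs_le]
  constructor
  · rw [neg_le, neg_sub, div_sub_div _ _ hnpos.ne' hmpos.ne',
      div_le_div_iff₀ (by positivity) hnpos]
    have h1 : m * (b - a) ≤ m * ε :=
      mul_le_mul_of_nonneg_left (by linarith [hAB.1]) hmpos.le
    have h2 : a * (m - n) ≤ a * ε := mul_le_mul_of_nonneg_left hXX.2 ha0
    have h3 : a * ε ≤ m * ε := mul_le_mul_of_nonneg_right ham hε.le
    have key : b * m - n * a ≤ 2 * ε * m := by nlinarith
    nlinarith [mul_le_mul_of_nonneg_right key hnpos.le]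
  · rw [div_sub_div _ _ hmpos.ne' hnpos.ne', div_le_div_iff₀ (by positivity) hnpos]
    have h1 : m * (a - b) ≤ m * ε := mul_le_mul_of_nonneg_left hAB.2 hmpos.le
    have h2 : a * (n - m) ≤ a * ε :=
      mul_le_mul_of_nonneg_left (by linarith [hXX.1]) ha0
    have h3 : a * ε ≤ m * ε := mul_le_mul_of_nonneg_right ham hε.le
    have key : a * n - m * b ≤ 2 * ε * m := by nlinarith
    nlinarith [mul_le_mul_of_nonneg_right key hnpos.le]
end

section
/- Let k ≥ 1. For an invertible k × k real matrix A, let γ_A denote the probability measure on ℝ^k with density proportional to x ↦ exp(−|Ax|²/2). Then for any invertible k × k matrices A and B, d_TV(γ_A, γ_B) ≤ C k ‖BA^{-1} − Id‖, where ‖·‖ is the operator norm and C > 0 is a universal constant. -/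
/-!
Write `φ v = exp (-|v|² / 2)`, so that `γ_A` has density `φ (A x) / Z_A`. If
`ε = ‖B A⁻¹ - 1‖ ≤ 1/2`, then `a = A x` and `b = B x` satisfy `|b - a| ≤ ε |a|`, and the
convexity bound `|e⁻ˣ - e⁻ʸ| ≤ |x - y| (e⁻ˣ + e⁻ʸ)` gives
`|φ a - φ b| ≤ 5 ε (|a|² φ a + |b|² φ b)`. The second moment `∫ |A x|² φ (A x) dx = k Z_A`
turns this into `‖φ ∘ A - φ ∘ B‖₁ ≤ 5 k ε (Z_A + Z_B)`. Since `|Z_A - Z_B|` is bounded by the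
same `L¹` distance, normalizing loses only a factor `4`. For `ε > 1/2` the trivial bound `2`
on the `L¹` distance of two probability densities suffices.
-/

open MeasureTheory

/-- The probability measure on `ℝ^k` with density proportional to `x ↦ exp(−|Ax|²/2)`. -/
noncomputable def gaussOf {k : ℕ} (A : Matrix (Fin k) (Fin k) ℝ) : Measure (Fin k → ℝ) :=
  volume.withDensity fun x =>
    ENNReal.ofReal
      (Real.exp (-(∑ i, (A.mulVec x i) ^ 2) / 2) /
        ∫ y : Fin k → ℝ, Real.exp (-(∑ i, (A.mulVec y i) ^ 2) / 2))

open ProbabilityTheory Real Matrix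

section Normalization

variable {α : Type*} [MeasurableSpace α] {μ : Measure α} {f g : α → ℝ}

lemma toReal_withDensity_ofReal_apply (hf : Integrable f μ) (hf0 : 0 ≤ f) {s : Set α}
    (hs : MeasurableSet s) :
    ((μ.withDensity fun x => ENNReal.ofReal (f x)) s).toReal = ∫ x in s, f x ∂μ := by
  rw [withDensity_apply _ hs, ← ofReal_integral_eq_lintegral_ofReal hf.integrableOn
    (.of_forall hf0), ENNReal.toReal_ofReal (setIntegral_nonneg hs fun x _ => hf0 x)]

lemma abs_toReal_withDensity_ofReal_sub_le (hf : Integrable f μ) (hg : Integrable g μ)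
    (hf0 : 0 ≤ f) (hg0 : 0 ≤ g) {s : Set α} (hs : MeasurableSet s) :
    |((μ.withDensity fun x => ENNReal.ofReal (f x)) s).toReal -
        ((μ.withDensity fun x => ENNReal.ofReal (g x)) s).toReal| ≤ ∫ x, |f x - g x| ∂μ := by
  rw [toReal_withDensity_ofReal_apply hf hf0 hs, toReal_withDensity_ofReal_apply hg hg0 hs,
    ← integral_sub hf.integrableOn hg.integrableOn]
  exact abs_integral_le_integral_abs.trans <|
    setIntegral_le_integral (hf.sub hg).abs (.of_forall fun _ => abs_nonneg _)

lemma integral_abs_sub_le_add (hf : Integrable f μ) (hg : Integrable g μ) (hf0 : 0 ≤ f)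
    (hg0 : 0 ≤ g) : ∫ x, |f x - g x| ∂μ ≤ ∫ x, f x ∂μ + ∫ x, g x ∂μ := by
  rw [← integral_add hf hg]
  refine integral_mono (hf.sub hg).abs (hf.add hg) fun x => ?_
  exact (abs_sub _ _).trans_eq (by rw [abs_of_nonneg (hf0 x), abs_of_nonneg (hg0 x)])

lemma integral_mul_integral_abs_div_sub_div_le (hf : Integrable f μ) (hg : Integrable g μ)
    (hg0 : 0 ≤ g) (hZf : 0 < ∫ x, f x ∂μ) (hZg : 0 < ∫ x, g x ∂μ) :
    (∫ x, f x ∂μ) * ∫ x, |f x / ∫ y, f y ∂μ - g x / ∫ y, g y ∂μ| ∂μ ≤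
      2 * ∫ x, |f x - g x| ∂μ := by
  set Zf := ∫ x, f x ∂μ
  set Zg := ∫ x, g x ∂μ
  have hpt (x : α) : Zf * |f x / Zf - g x / Zg| ≤ |f x - g x| + g x * (|Zf - Zg| / Zg) := by
    have hsplit : Zf * (f x / Zf - g x / Zg) = (f x - g x) + g x * ((Zg - Zf) / Zg) := by
      field_simp
      ring
    calc Zf * |f x / Zf - g x / Zg| = |(f x - g x) + g x * ((Zg - Zf) / Zg)| := by
          rw [← hsplit, abs_mul, abs_of_pos hZf]
      _ ≤ |f x - g x| + |g x * ((Zg - Zf) / Zg)| := abs_add_le _ _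
      _ = |f x - g x| + g x * (|Zf - Zg| / Zg) := by
          rw [abs_mul, abs_div, abs_of_nonneg (hg0 x), abs_of_pos hZg, abs_sub_comm Zg]
  have hfg : Integrable (fun x => |f x - g x|) μ := (hf.sub hg).abs
  have hZ : |Zf - Zg| ≤ ∫ x, |f x - g x| ∂μ := by
    rw [← integral_sub hf hg]
    exact abs_integral_le_integral_abs
  calc Zf * ∫ x, |f x / Zf - g x / Zg| ∂μ
      = ∫ x, Zf * |f x / Zf - g x / Zg| ∂μ := (integral_const_mul _ _).symm
    _ ≤ ∫ x, (|f x - g x| + g x * (|Zf - Zg| / Zg)) ∂μ :=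
        integral_mono_of_nonneg (.of_forall fun _ => by positivity)
          (hfg.add (hg.mul_const _)) (.of_forall hpt)
    _ = ∫ x, |f x - g x| ∂μ + |Zf - Zg| := by
        rw [integral_add hfg (hg.mul_const _), integral_mul_const,
          mul_div_cancel₀ _ hZg.ne']
    _ ≤ 2 * ∫ x, |f x - g x| ∂μ := by linarith

lemma integral_abs_div_sub_div_le (hf : Integrable f μ) (hg : Integrable g μ) (hf0 : 0 ≤ f)
    (hg0 : 0 ≤ g) (hZf : 0 < ∫ x, f x ∂μ) (hZg : 0 < ∫ x, g x ∂μ) {c : ℝ}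
    (hc : ∫ x, |f x - g x| ∂μ ≤ c * ((∫ x, f x ∂μ) + ∫ x, g x ∂μ)) :
    ∫ x, |f x / ∫ y, f y ∂μ - g x / ∫ y, g y ∂μ| ∂μ ≤ 4 * c := by
  have hfg := integral_mul_integral_abs_div_sub_div_le hf hg hg0 hZf hZg
  have hgf := integral_mul_integral_abs_div_sub_div_le hg hf hf0 hZg hZf
  simp only [abs_sub_comm (g _ / _), abs_sub_comm (g _)] at hgf
  refine le_of_mul_le_mul_left ?_ (add_pos hZf hZg)
  nlinarith

end Normalization

lemma abs_exp_neg_sub_exp_neg_le (x y : ℝ) :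
    |exp (-x) - exp (-y)| ≤ |x - y| * (exp (-x) + exp (-y)) := by
  wlog hxy : x ≤ y generalizing x y
  · rw [abs_sub_comm, abs_sub_comm x, add_comm]
    exact this y x (le_of_not_ge hxy)
  have hlin : exp (-x) * (1 + (x - y)) ≤ exp (-y) := by
    calc exp (-x) * (1 + (x - y)) ≤ exp (-x) * exp (x - y) := by
          gcongr; linarith [add_one_le_exp (x - y)]
      _ = exp (-y) := by rw [← exp_add]; ring_nf
  have hmono : exp (-y) ≤ exp (-x) := exp_le_exp.mpr (neg_le_neg hxy)
  rw [abs_of_nonneg (sub_nonneg.mpr hmono), abs_of_nonpos (sub_nonpos.mpr hxy)]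
  nlinarith [exp_pos (-y), exp_pos (-x)]

lemma abs_exp_neg_sq_div_two_sub_le {ε r s : ℝ} (hε0 : 0 ≤ ε) (hε : ε ≤ 1 / 2) (hr : 0 ≤ r)
    (hs : 0 ≤ s) (hrs : |s - r| ≤ ε * r) :
    |exp (-r ^ 2 / 2) - exp (-s ^ 2 / 2)| ≤
      5 * ε * (r ^ 2 * exp (-r ^ 2 / 2) + s ^ 2 * exp (-s ^ 2 / 2)) := by
  obtain ⟨hsr₁, hsr₂⟩ := abs_le.mp hrs
  have hs_le : s ≤ 3 / 2 * r := by nlinarith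
  have hr_le : r ^ 2 ≤ 4 * s ^ 2 := by
    have : r ≤ 2 * s := by nlinarith [mul_le_mul_of_nonneg_right hε hr]
    nlinarith
  have hdiff : |r ^ 2 / 2 - s ^ 2 / 2| ≤ 5 / 4 * ε * r ^ 2 := by
    rw [show r ^ 2 / 2 - s ^ 2 / 2 = (s - r) * (-(r + s) / 2) by ring, abs_mul,
      abs_of_nonpos (by linarith : -(r + s) / 2 ≤ 0)]
    nlinarith [mul_le_mul_of_nonneg_right hrs (by linarith : 0 ≤ (r + s) / 2)]
  have h := abs_exp_neg_sub_exp_neg_le (r ^ 2 / 2) (s ^ 2 / 2)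
  simp only [neg_div] at h ⊢
  have hEr := exp_pos (-(r ^ 2 / 2))
  have hEs := exp_pos (-(s ^ 2 / 2))
  calc |exp (-(r ^ 2 / 2)) - exp (-(s ^ 2 / 2))|
      ≤ 5 / 4 * ε * r ^ 2 * (exp (-(r ^ 2 / 2)) + exp (-(s ^ 2 / 2))) :=
        h.trans (mul_le_mul_of_nonneg_right hdiff (add_pos hEr hEs).le)
    _ ≤ 5 * ε * (r ^ 2 * exp (-(r ^ 2 / 2)) + s ^ 2 * exp (-(s ^ 2 / 2))) := by
        nlinarith [mul_le_mul_of_nonneg_left (mul_le_mul_of_nonneg_right hr_le hEs.le) hε0,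
          mul_nonneg (mul_nonneg hε0 (sq_nonneg r)) hEr.le]

lemma integral_exp_neg_sq_div_two : ∫ t : ℝ, exp (-t ^ 2 / 2) = √(2 * π) := by
  simpa [div_eq_inv_mul, mul_comm] using integral_gaussian 2⁻¹

lemma integral_sq_mul_exp_neg_sq_div_two : ∫ t : ℝ, t ^ 2 * exp (-t ^ 2 / 2) = √(2 * π) := by
  have hvar : ∫ t, t ^ 2 ∂gaussianReal 0 1 = 1 := by
    have := variance_id_gaussianReal (μ := 0) (v := 1)
    rwa [variance_of_integral_eq_zero measurable_id.aemeasurable (by simp)] at this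
  simp only [integral_gaussianReal_eq_integral_smul one_ne_zero, gaussianPDFReal_def, smul_eq_mul,
    sub_zero, NNReal.coe_one, mul_one, mul_assoc, integral_const_mul] at hvar
  rw [inv_mul_eq_iff_eq_mul₀ (by positivity), mul_one] at hvar
  simpa only [mul_comm] using hvar

lemma integrable_exp_neg_sq_div_two : Integrable fun t : ℝ => exp (-t ^ 2 / 2) := by
  simpa [neg_div, div_eq_inv_mul] using integrable_exp_neg_mul_sq (b := 2⁻¹) (by norm_num)

lemma integrable_sq_mul_exp_neg_sq_div_two : Integrable fun t : ℝ => t ^ 2 * exp (-t ^ 2 / 2) := by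
  simpa [neg_div, div_eq_inv_mul] using
    integrable_rpow_mul_exp_neg_mul_sq (b := 2⁻¹) (by norm_num) (s := 2) (by norm_num)

section StandardGaussian

variable {ι : Type*} [Fintype ι]

noncomputable def gaussWeight (v : ι → ℝ) : ℝ := exp (-(∑ i, v i ^ 2) / 2)

lemma gaussWeight_eq_prod (v : ι → ℝ) : gaussWeight v = ∏ i, exp (-v i ^ 2 / 2) := by
  rw [gaussWeight, ← exp_sum, ← Finset.sum_div, ← Finset.sum_neg_distrib]

lemma gaussWeight_pos (v : ι → ℝ) : 0 < gaussWeight v := exp_pos _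

lemma integrable_gaussWeight : Integrable (gaussWeight : (ι → ℝ) → ℝ) := by
  simp_rw [funext gaussWeight_eq_prod]
  exact Integrable.fintype_prod (f := fun _ t => exp (-t ^ 2 / 2))
    fun _ => integrable_exp_neg_sq_div_two

lemma integral_gaussWeight : ∫ v : ι → ℝ, gaussWeight v = √(2 * π) ^ Fintype.card ι := by
  simp_rw [gaussWeight_eq_prod]
  rw [integral_fintype_prod_volume_eq_pow (fun t : ℝ => exp (-t ^ 2 / 2)),
    integral_exp_neg_sq_div_two]

lemma sq_mul_gaussWeight_eq_prod [DecidableEq ι] (i : ι) (v : ι → ℝ) :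
    v i ^ 2 * gaussWeight v = ∏ j, (if j = i then v j ^ 2 else 1) * exp (-v j ^ 2 / 2) := by
  rw [Finset.prod_mul_distrib, gaussWeight_eq_prod, Finset.prod_ite_eq']
  simp

lemma integrable_sq_mul_gaussWeight (i : ι) :
    Integrable fun v : ι → ℝ => v i ^ 2 * gaussWeight v := by
  classical
  simp_rw [sq_mul_gaussWeight_eq_prod i]
  refine Integrable.fintype_prod
    (f := fun j t => (if j = i then t ^ 2 else 1) * exp (-t ^ 2 / 2)) fun j => ?_
  split_ifs
  · exact integrable_sq_mul_exp_neg_sq_div_two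
  · simpa using integrable_exp_neg_sq_div_two

lemma integral_sq_mul_gaussWeight (i : ι) :
    ∫ v : ι → ℝ, v i ^ 2 * gaussWeight v = ∫ v : ι → ℝ, gaussWeight v := by
  classical
  simp_rw [sq_mul_gaussWeight_eq_prod i]
  rw [integral_fintype_prod_volume_eq_prod
      (f := fun j t => (if j = i then t ^ 2 else 1) * exp (-t ^ 2 / 2)),
    integral_gaussWeight, ← Finset.card_univ, ← Finset.prod_const]
  refine Finset.prod_congr rfl fun j _ => ?_
  split_ifs
  · exact integral_sq_mul_exp_neg_sq_div_two
  · simpa using integral_exp_neg_sq_div_two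

lemma integrable_sqNorm_mul_gaussWeight :
    Integrable fun v : ι → ℝ => (∑ i, v i ^ 2) * gaussWeight v := by
  simp_rw [Finset.sum_mul]
  exact integrable_finsetSum _ fun i _ => integrable_sq_mul_gaussWeight i

lemma integral_sqNorm_mul_gaussWeight :
    ∫ v : ι → ℝ, (∑ i, v i ^ 2) * gaussWeight v = Fintype.card ι * ∫ v : ι → ℝ, gaussWeight v := by
  simp_rw [Finset.sum_mul]
  rw [integral_finsetSum _ fun i _ => integrable_sq_mul_gaussWeight i]
  simp [integral_sq_mul_gaussWeight]

end StandardGaussian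

section LinearChangeOfVariables

variable {ι : Type*} [Fintype ι] [DecidableEq ι] {A : Matrix ι ι ℝ}

lemma measurableEmbedding_mulVec (hA : IsUnit A.det) :
    MeasurableEmbedding fun x : ι → ℝ => A *ᵥ x :=
  (LinearMap.isClosedEmbedding_of_injective (f := A.mulVecLin) <| LinearMap.ker_eq_bot.mpr <|
    Matrix.mulVec_injective_of_isUnit <| (A.isUnit_iff_isUnit_det).mpr hA).measurableEmbedding

lemma map_mulVec_volume (hA : IsUnit A.det) :
    volume.map (fun x : ι → ℝ => A *ᵥ x) = ENNReal.ofReal |A.det|⁻¹ • volume := by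
  have := Real.map_matrix_volume_pi_eq_smul_volume_pi hA.ne_zero
  rwa [Matrix.toLin'_apply', abs_inv] at this

lemma MeasureTheory.Integrable.comp_mulVec (hA : IsUnit A.det) {g : (ι → ℝ) → ℝ}
    (hg : Integrable g) :
    Integrable fun x => g (A *ᵥ x) := by
  refine (measurableEmbedding_mulVec hA).integrable_map_iff.mp ?_
  rw [map_mulVec_volume hA]
  exact hg.smul_measure ENNReal.ofReal_ne_top

lemma integral_comp_mulVec (hA : IsUnit A.det) (g : (ι → ℝ) → ℝ) :
    ∫ x, g (A *ᵥ x) = |A.det|⁻¹ * ∫ y, g y := by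
  rw [← (measurableEmbedding_mulVec hA).integral_map, map_mulVec_volume hA,
    integral_smul_measure, ENNReal.toReal_ofReal (by positivity), smul_eq_mul]

end LinearChangeOfVariables

section GaussianComparison

open scoped Matrix.Norms.L2Operator

variable {ι : Type*} [Fintype ι]

lemma sum_sq_eq_norm_toLp_sq (v : ι → ℝ) : ∑ i, v i ^ 2 = ‖WithLp.toLp 2 v‖ ^ 2 := by
  simp [EuclideanSpace.real_norm_sq_eq]

lemma abs_gaussWeight_sub_le {ε : ℝ} (hε0 : 0 ≤ ε) (hε : ε ≤ 1 / 2) {a b : ι → ℝ}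
    (hab : ‖WithLp.toLp 2 (b - a)‖ ≤ ε * ‖WithLp.toLp 2 a‖) :
    |gaussWeight a - gaussWeight b| ≤
      5 * ε * ((∑ i, a i ^ 2) * gaussWeight a + (∑ i, b i ^ 2) * gaussWeight b) := by
  simp only [gaussWeight, sum_sq_eq_norm_toLp_sq]
  refine abs_exp_neg_sq_div_two_sub_le hε0 hε (norm_nonneg _) (norm_nonneg _) ?_
  rw [WithLp.toLp_sub] at hab
  exact (abs_norm_sub_norm_le _ _).trans hab

variable [DecidableEq ι] {A B : Matrix ι ι ℝ}

lemma mulVec_sub_mulVec_eq_mul_inv_sub_one (hA : IsUnit A.det) (x : ι → ℝ) :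
    B *ᵥ x - A *ᵥ x = (B * A⁻¹ - 1) *ᵥ (A *ᵥ x) := by
  rw [mulVec_mulVec, sub_mul, Matrix.mul_assoc, nonsing_inv_mul A hA, Matrix.mul_one,
    Matrix.one_mul, sub_mulVec]

lemma abs_gaussWeight_mulVec_sub_le (hA : IsUnit A.det) (hε : ‖B * A⁻¹ - 1‖ ≤ 1 / 2)
    (x : ι → ℝ) :
    |gaussWeight (A *ᵥ x) - gaussWeight (B *ᵥ x)| ≤ 5 * ‖B * A⁻¹ - 1‖ *
      ((∑ i, (A *ᵥ x) i ^ 2) * gaussWeight (A *ᵥ x) +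
        (∑ i, (B *ᵥ x) i ^ 2) * gaussWeight (B *ᵥ x)) := by
  refine abs_gaussWeight_sub_le (norm_nonneg _) hε ?_
  rw [mulVec_sub_mulVec_eq_mul_inv_sub_one hA]
  exact (B * A⁻¹ - 1).l2_opNorm_mulVec (WithLp.toLp 2 (A *ᵥ x))

lemma integral_sqNorm_mul_gaussWeight_mulVec (hA : IsUnit A.det) :
    ∫ x, (∑ i, (A *ᵥ x) i ^ 2) * gaussWeight (A *ᵥ x) =
      Fintype.card ι * ∫ x, gaussWeight (A *ᵥ x) := by
  rw [integral_comp_mulVec hA (fun v => (∑ i, v i ^ 2) * gaussWeight v),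
    integral_comp_mulVec hA, integral_sqNorm_mul_gaussWeight]
  ring

lemma integral_abs_gaussWeight_mulVec_sub_le (hA : IsUnit A.det) (hB : IsUnit B.det)
    (hε : ‖B * A⁻¹ - 1‖ ≤ 1 / 2) :
    ∫ x, |gaussWeight (A *ᵥ x) - gaussWeight (B *ᵥ x)| ≤ 5 * ‖B * A⁻¹ - 1‖ *
      Fintype.card ι * ((∫ x, gaussWeight (A *ᵥ x)) + ∫ x, gaussWeight (B *ᵥ x)) := by
  have hint (C : Matrix ι ι ℝ) (hC : IsUnit C.det) :
      Integrable fun x => (∑ i, (C *ᵥ x) i ^ 2) * gaussWeight (C *ᵥ x) :=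
    integrable_sqNorm_mul_gaussWeight.comp_mulVec hC
  calc ∫ x, |gaussWeight (A *ᵥ x) - gaussWeight (B *ᵥ x)|
      ≤ ∫ x, 5 * ‖B * A⁻¹ - 1‖ * ((∑ i, (A *ᵥ x) i ^ 2) * gaussWeight (A *ᵥ x) +
          (∑ i, (B *ᵥ x) i ^ 2) * gaussWeight (B *ᵥ x)) :=
        integral_mono_of_nonneg (.of_forall fun _ => abs_nonneg _)
          (((hint A hA).add (hint B hB)).const_mul _)
          (.of_forall (abs_gaussWeight_mulVec_sub_le hA hε))
    _ = _ := by
        rw [integral_const_mul, integral_add (hint A hA) (hint B hB),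
          integral_sqNorm_mul_gaussWeight_mulVec hA, integral_sqNorm_mul_gaussWeight_mulVec hB]
        ring

end GaussianComparison

section GaussianDensity

open scoped Matrix.Norms.L2Operator

variable {ι : Type*} [Fintype ι]

noncomputable def gaussDensity (A : Matrix ι ι ℝ) (x : ι → ℝ) : ℝ :=
  gaussWeight (A *ᵥ x) / ∫ y, gaussWeight (A *ᵥ y)

lemma gaussOf_eq_withDensity {k : ℕ} (A : Matrix (Fin k) (Fin k) ℝ) :
    gaussOf A = volume.withDensity fun x => ENNReal.ofReal (gaussDensity A x) :=
  rfl

lemma gaussDensity_nonneg (A : Matrix ι ι ℝ) : 0 ≤ gaussDensity A := fun _ =>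
  div_nonneg (gaussWeight_pos _).le (integral_nonneg fun _ => (gaussWeight_pos _).le)

variable [DecidableEq ι] {A B : Matrix ι ι ℝ}

lemma integral_gaussWeight_mulVec_pos (hA : IsUnit A.det) : 0 < ∫ x, gaussWeight (A *ᵥ x) := by
  rw [integral_comp_mulVec hA, integral_gaussWeight]
  have := hA.ne_zero
  positivity

lemma integrable_gaussDensity (hA : IsUnit A.det) : Integrable (gaussDensity A) :=
  (integrable_gaussWeight.comp_mulVec hA).div_const _

lemma integral_gaussDensity (hA : IsUnit A.det) : ∫ x, gaussDensity A x = 1 := by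
  unfold gaussDensity
  rw [integral_div, div_self (integral_gaussWeight_mulVec_pos hA).ne']

lemma integral_abs_gaussDensity_sub_le [Nonempty ι] (hA : IsUnit A.det) (hB : IsUnit B.det) :
    ∫ x, |gaussDensity A x - gaussDensity B x| ≤
      20 * Fintype.card ι * ‖B * A⁻¹ - 1‖ := by
  rcases le_or_gt ‖B * A⁻¹ - 1‖ (1 / 2) with hsmall | hlarge
  · refine (integral_abs_div_sub_div_le (integrable_gaussWeight.comp_mulVec hA)
      (integrable_gaussWeight.comp_mulVec hB) (fun _ => (gaussWeight_pos _).le)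
      (fun _ => (gaussWeight_pos _).le) (integral_gaussWeight_mulVec_pos hA)
      (integral_gaussWeight_mulVec_pos hB)
      (integral_abs_gaussWeight_mulVec_sub_le hA hB hsmall)).trans_eq ?_
    ring
  · have hcard : (1 : ℝ) ≤ Fintype.card ι := by exact_mod_cast Fintype.card_pos
    calc ∫ x, |gaussDensity A x - gaussDensity B x|
        ≤ (∫ x, gaussDensity A x) + ∫ x, gaussDensity B x :=
          integral_abs_sub_le_add (integrable_gaussDensity hA) (integrable_gaussDensity hB)
            (gaussDensity_nonneg A) (gaussDensity_nonneg B)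
      _ = 2 := by rw [integral_gaussDensity hA, integral_gaussDensity hB]; norm_num
      _ ≤ 20 * Fintype.card ι * ‖B * A⁻¹ - 1‖ := by nlinarith

end GaussianDensity

/-- There is a universal constant `C > 0` such that for all `k ≥ 1` and all invertible
`k × k` matrices `A`, `B`, one has `d_TV(γ_A, γ_B) ≤ C k ‖B A⁻¹ − Id‖`, where `‖·‖` is the
operator norm (w.r.t. the Euclidean norm). -/
theorem stmt8 :
    ∃ C : ℝ, 0 < C ∧ ∀ k : ℕ, 1 ≤ k → ∀ A B : Matrix (Fin k) (Fin k) ℝ,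
      IsUnit A.det → IsUnit B.det →
      ∀ s : Set (Fin k → ℝ), MeasurableSet s →
        |((gaussOf A) s).toReal - ((gaussOf B) s).toReal| ≤
          C * k * ‖LinearMap.toContinuousLinearMap
            (Matrix.toEuclideanLin (B * A⁻¹ - 1))‖ := by
  refine ⟨20, by norm_num, fun k hk A B hA hB s hs => ?_⟩
  have : Nonempty (Fin k) := ⟨⟨0, hk⟩⟩
  rw [gaussOf_eq_withDensity, gaussOf_eq_withDensity]
  calc _ ≤ ∫ x, |gaussDensity A x - gaussDensity B x| :=
        abs_toReal_withDensity_ofReal_sub_le (integrable_gaussDensity hA)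
          (integrable_gaussDensity hB) (gaussDensity_nonneg A) (gaussDensity_nonneg B) hs
    _ ≤ _ := (integral_abs_gaussDensity_sub_le hA hB).trans_eq (by rw [Fintype.card_fin, Matrix.l2_opNorm_def]; rfl)
end

section
/- Let ℓ ≥ 2 and n be positive integers. Let μ be a Borel probability measure on S^{n−1} such that ∫ (x·θ)² dμ(x) ≤ ℓ^{−50} for every unit vector θ. If X₁,…,X_ℓ are independent random vectors distributed according to μ, then with probability at least 1 − 4ℓ^{−6}, for every 2 ≤ i ≤ ℓ the orthogonal projection of X_i onto the span of X₁,…,X_{i−1} has norm strictly less than ℓ^{−21}/2; in particular, with positive probability the tuple (X₁,…,X_ℓ) is (ℓ^{−20}/2)-orthogonal. -/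
/-!
For a fixed subspace `K` of dimension `d`, expanding `Proj_K x` in an orthonormal basis of `K` and
using the directional moment bound gives `∫ ‖Proj_K x‖² dμ ≤ d ℓ^{-50}`, hence by Markov
`μ (‖Proj_K x‖ ≥ t) ≤ d ℓ^{-50} / t²`. Since `X_i` is independent of `(X_j)_{j<i}`, Fubini applies
this to `K = span (X_j)_{j<i}`, of dimension `< ℓ`; a union bound over `i` gives the first claim.
The projection depends measurably on the `X_j` because it can be written through the
Gram–Schmidt vectors of `(X_j)_{j<i}`.

On that event, with all `X_i` unit vectors, the normalised Gram–Schmidt vectors `w_j` of the `X_i`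
are orthonormal and `X_i = ∑_{j ≤ i} ⟪w_j, X_i⟫ w_j`. For `j < i` the coefficient equals
`⟪w_j, Proj X_i⟫`, of size `< ℓ^{-21}/2`, while the diagonal one is
`√(1 - ‖Proj X_i‖²) ≥ 1/2`, which gives `(ℓ^{-20}/2)`-orthogonality.
-/

open MeasureTheory ENNReal
open scoped RealInnerProductSpace

/-- An ℓ-tuple of non-zero vectors `v` is ε-orthogonal: there exist orthonormal
`w₁,…,w_ℓ` and reals `a_{ij}` (j ≤ i) with `v_i = Σ_{j≤i} a_{ij} w_j` and
`|a_{ij}| ≤ ε |a_{ii}|` for `j < i`. -/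
def IsEpsOrthogonal {n l : ℕ} (ε : ℝ) (v : Fin l → EuclideanSpace ℝ (Fin n)) : Prop :=
  (∀ i, v i ≠ 0) ∧
  ∃ w : Fin l → EuclideanSpace ℝ (Fin n), Orthonormal ℝ w ∧
    ∃ a : Fin l → Fin l → ℝ,
      (∀ i, v i = ∑ j ∈ Finset.Iic i, a i j • w j) ∧
      ∀ i j : Fin l, j < i → |a i j| ≤ ε * |a i i|

section GramSchmidt

open Submodule InnerProductSpace

variable {E : Type*} [NormedAddCommGroup E] [InnerProductSpace ℝ E]

theorem inner_eq_zero_of_mem_span {s : Set E} {z y : E} (h : ∀ x ∈ s, ⟪z, x⟫ = 0)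
    (hy : y ∈ span ℝ s) : ⟪z, y⟫ = 0 :=
  (mem_orthogonal_singleton_iff_inner_right (𝕜 := ℝ)).1 <|
    span_le.2 (fun x hx => (mem_orthogonal_singleton_iff_inner_right (𝕜 := ℝ)).2 (h x hx)) hy

variable {ι : Type*} [LinearOrder ι] [LocallyFiniteOrderBot ι] [WellFoundedLT ι]

theorem inner_gramSchmidt_eq_zero_of_mem_span_Iio (f : ι → E) {i : ι} {y : E}
    (hy : y ∈ span ℝ (f '' Set.Iio i)) : ⟪gramSchmidt ℝ f i, y⟫ = 0 := by
  rw [← span_gramSchmidt_Iio] at hy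
  refine inner_eq_zero_of_mem_span ?_ hy
  rintro _ ⟨j, hj, rfl⟩
  exact gramSchmidt_orthogonal ℝ f (ne_of_lt hj).symm

variable [FiniteDimensional ℝ E]

/-- Zero vectors among the `e j` are allowed (their coefficient is `0 / 0 = 0`). -/
theorem starProjection_span_image_eq_sum {κ : Type*} {e : κ → E}
    (he : Pairwise fun i j => ⟪e i, e j⟫ = 0) (s : Finset κ) (x : E) :
    (span ℝ (e '' s)).starProjection x = ∑ j ∈ s, (⟪e j, x⟫ / ‖e j‖ ^ 2) • e j := by
  refine eq_starProjection_of_mem_of_inner_eq_zero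
    (sum_mem fun j hj => smul_mem _ _ (subset_span ⟨j, hj, rfl⟩)) fun y hy => ?_
  refine inner_eq_zero_of_mem_span ?_ hy
  rintro _ ⟨k, hk, rfl⟩
  rw [inner_sub_left, sum_inner, Finset.sum_eq_single_of_mem k hk fun j _ hjk => by
    rw [real_inner_smul_left, he hjk, mul_zero]]
  rw [real_inner_smul_left, real_inner_self_eq_norm_sq,
    div_mul_cancel_of_imp fun h => by simp [norm_eq_zero.1 (pow_eq_zero_iff two_ne_zero |>.1 h)],
    real_inner_comm, sub_self]

theorem starProjection_span_Iio_apply_self (f : ι → E) (i : ι) :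
    (span ℝ (f '' Set.Iio i)).starProjection (f i) = f i - gramSchmidt ℝ f i := by
  rw [← span_gramSchmidt_Iio, ← Finset.coe_Iio,
    starProjection_span_image_eq_sum (gramSchmidt_pairwise_orthogonal ℝ f)]
  exact eq_sub_of_add_eq' (gramSchmidt_def'' ℝ f i).symm

theorem norm_sq_gramSchmidt_add_norm_sq_starProjection (f : ι → E) (i : ι) :
    ‖gramSchmidt ℝ f i‖ ^ 2 + ‖(span ℝ (f '' Set.Iio i)).starProjection (f i)‖ ^ 2 =
      ‖f i‖ ^ 2 := by
  rw [norm_sq_eq_add_norm_sq_starProjection (f i) (span ℝ (f '' Set.Iio i)),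
    starProjection_orthogonal_val, starProjection_span_Iio_apply_self, sub_sub_cancel (f i),
    add_comm]

theorem inner_gramSchmidtNormed_self (f : ι → E) (i : ι) :
    ⟪gramSchmidtNormed ℝ f i, f i⟫ = ‖gramSchmidt ℝ f i‖ := by
  have hproj := starProjection_apply_mem (span ℝ (f '' Set.Iio i)) (f i)
  rw [starProjection_span_Iio_apply_self] at hproj
  rw [← add_sub_cancel (gramSchmidt ℝ f i) (f i), inner_add_right, gramSchmidtNormed,
    real_inner_smul_left, real_inner_smul_left, inner_gramSchmidt_eq_zero_of_mem_span_Iio f hproj,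
    real_inner_self_eq_norm_sq, mul_zero, add_zero, RCLike.ofReal_real_eq_id, id, inv_mul_eq_div,
    sq, mul_self_div_self]

theorem abs_inner_gramSchmidtNormed_le_norm_starProjection (f : ι → E) {i j : ι} (hji : j < i) :
    |⟪gramSchmidtNormed ℝ f j, f i⟫| ≤ ‖(span ℝ (f '' Set.Iio i)).starProjection (f i)‖ := by
  have hnorm : ‖gramSchmidtNormed ℝ f j‖ ≤ 1 := by
    by_cases h : gramSchmidtNormed ℝ f j = 0
    · simp [h]
    · exact (gramSchmidtNormed_unit_length' h).le
  have horth : ⟪gramSchmidtNormed ℝ f j, gramSchmidt ℝ f i⟫ = 0 := by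
    rw [gramSchmidtNormed, real_inner_smul_left, gramSchmidt_orthogonal ℝ f hji.ne, mul_zero]
  have hinner : ⟪gramSchmidtNormed ℝ f j, f i⟫ =
      ⟪gramSchmidtNormed ℝ f j, (span ℝ (f '' Set.Iio i)).starProjection (f i)⟫ := by
    rw [starProjection_span_Iio_apply_self, inner_sub_right, horth, sub_zero]
  rw [hinner]
  exact (abs_real_inner_le_norm _ _).trans (mul_le_of_le_one_left (norm_nonneg _) hnorm)

variable [MeasurableSpace E] [BorelSpace E]

theorem measurable_gramSchmidt (j : ι) : Measurable fun u : ι → E => gramSchmidt ℝ u j := by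
  induction j using WellFoundedLT.induction with
  | ind j ih =>
    have hdef : (fun u : ι → E => gramSchmidt ℝ u j) = fun u => u j - ∑ k ∈ Finset.Iio j,
        (⟪gramSchmidt ℝ u k, u j⟫ / ‖gramSchmidt ℝ u k‖ ^ 2) • gramSchmidt ℝ u k := by
      funext u
      exact eq_sub_of_add_eq (gramSchmidt_def'' ℝ u j).symm
    rw [hdef]
    refine (measurable_pi_apply j).sub (Finset.measurable_sum _ fun k hk => ?_)
    have hk := ih k (Finset.mem_Iio.1 hk)
    exact ((hk.inner (measurable_pi_apply j)).div (hk.norm.pow_const 2)).smul hk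

theorem measurable_starProjection_span_range {κ : Type*} [Fintype κ] [LinearOrder κ]
    [LocallyFiniteOrderBot κ] :
    Measurable fun p : (κ → E) × E => (span ℝ (Set.range p.1)).starProjection p.2 := by
  have hsum : (fun p : (κ → E) × E => (span ℝ (Set.range p.1)).starProjection p.2) =
      fun p => ∑ j, (⟪gramSchmidt ℝ p.1 j, p.2⟫ / ‖gramSchmidt ℝ p.1 j‖ ^ 2) •
        gramSchmidt ℝ p.1 j := by
    funext p
    rw [← span_gramSchmidt, ← Set.image_univ, ← Finset.coe_univ,
      starProjection_span_image_eq_sum (gramSchmidt_pairwise_orthogonal ℝ p.1)]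
  rw [hsum]
  refine Finset.measurable_sum _ fun j _ => ?_
  have hj : Measurable fun p : (κ → E) × E => gramSchmidt ℝ p.1 j :=
    (measurable_gramSchmidt j).comp measurable_fst
  exact ((hj.inner measurable_snd).div (hj.norm.pow_const 2)).smul hj

end GramSchmidt

open Submodule InnerProductSpace in
theorem isEpsOrthogonal_of_norm_starProjection_le {n l : ℕ} {δ ε : ℝ}
    (v : Fin l → EuclideanSpace ℝ (Fin n)) (hv : ∀ i, ‖v i‖ = 1) (hδ : δ ≤ 1 / 2)
    (hε : 2 * δ ≤ ε) (hproj : ∀ i, ‖(span ℝ (v '' Set.Iio i)).starProjection (v i)‖ ≤ δ) :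
    IsEpsOrthogonal ε v := by
  set w := gramSchmidtNormed ℝ v
  have hdiag : ∀ i, 1 / 2 ≤ ⟪w i, v i⟫ := by
    intro i
    have h := norm_sq_gramSchmidt_add_norm_sq_starProjection v i
    rw [hv i] at h
    rw [inner_gramSchmidtNormed_self]
    nlinarith [hproj i, norm_nonneg ((span ℝ (v '' Set.Iio i)).starProjection (v i)),
      norm_nonneg (gramSchmidt ℝ v i)]
  have hw : Orthonormal ℝ w := by
    have hne : ∀ i, w i ≠ 0 := fun i h => absurd (hdiag i) (by simp [h])
    exact (gramSchmidtNormed_orthonormal' v).comp (fun i => ⟨i, hne i⟩)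
      fun _ _ h => congrArg Subtype.val h
  refine ⟨fun i h => by simpa [h] using hv i, w, hw, fun i j => ⟪w j, v i⟫, fun i => ?_,
    fun i j hji => ?_⟩
  · have hmem : v i ∈ span ℝ (w '' ↑(Finset.Iic i)) := by
      rw [Finset.coe_Iic, span_gramSchmidtNormed, span_gramSchmidt_Iic]
      exact subset_span ⟨i, Set.mem_Iic.2 le_rfl, rfl⟩
    rw [← starProjection_eq_self_iff.2 hmem, starProjection_span_image_eq_sum hw.2]
    simp [hw.1]
  · calc |⟪w j, v i⟫| ≤ δ := (abs_inner_gramSchmidtNormed_le_norm_starProjection v hji).trans (hproj i)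
      _ ≤ ε * (1 / 2) := by linarith
      _ ≤ ε * |⟪w i, v i⟫| := by
        have : 0 ≤ ε := by linarith [(norm_nonneg _).trans (hproj i)]
        gcongr
        exact (hdiag i).trans (le_abs_self _)

theorem isEpsOrthogonal_of_norm_starProjection_lt_zpow {n l : ℕ} (hl : 2 ≤ l)
    (v : Fin l → EuclideanSpace ℝ (Fin n)) (hv : ∀ i, ‖v i‖ = 1)
    (hproj : ∀ i, ‖(Submodule.span ℝ (v '' Set.Iio i)).starProjection (v i)‖ <
      (l : ℝ) ^ (-(21 : ℤ)) / 2) :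
    IsEpsOrthogonal ((l : ℝ) ^ (-(20 : ℤ)) / 2) v := by
  have hl1 : (1 : ℝ) ≤ l := by exact_mod_cast one_le_two.trans hl
  refine isEpsOrthogonal_of_norm_starProjection_le v hv ?_ ?_ fun i => (hproj i).le
  · linarith [zpow_le_one_of_nonpos₀ hl1 (by norm_num : (-(21 : ℤ)) ≤ 0)]
  · have h : (l : ℝ) ^ (-(20 : ℤ)) = l * l ^ (-(21 : ℤ)) := by
      rw [← zpow_one_add₀ (by positivity)]
      norm_num
    have hl2 : (2 : ℝ) ≤ l := by exact_mod_cast hl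
    rw [h]
    nlinarith [zpow_pos (by positivity : (0 : ℝ) < l) (-(21 : ℤ))]

theorem ProbabilityTheory.IndepFun.measure_preimage_le_of_forall_slice_le {Ω F G : Type*}
    [MeasurableSpace Ω] [MeasurableSpace F] [MeasurableSpace G] {P : Measure Ω}
    [IsProbabilityMeasure P] {Y : Ω → F} {Z : Ω → G} (hY : Measurable Y) (hZ : Measurable Z)
    (hYZ : IndepFun Y Z P) {S : Set (F × G)} (hS : MeasurableSet S) {c : ℝ≥0∞}
    (hslice : ∀ y, P.map Z (Prod.mk y ⁻¹' S) ≤ c) :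
    P ((fun ω => (Y ω, Z ω)) ⁻¹' S) ≤ c := by
  have : IsProbabilityMeasure (P.map Y) := Measure.isProbabilityMeasure_map hY.aemeasurable
  rw [← Measure.map_apply (hY.prodMk hZ) hS,
    (indepFun_iff_map_prod_eq_prod_map_map hY.aemeasurable hZ.aemeasurable).1 hYZ,
    Measure.prod_apply hS]
  calc ∫⁻ y, P.map Z (Prod.mk y ⁻¹' S) ∂P.map Y ≤ ∫⁻ _, c ∂P.map Y := lintegral_mono hslice
    _ = c := by simp

theorem ae_norm_eq_one_of_measure_sphere_eq_one {F : Type*} [NormedAddCommGroup F]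
    [MeasurableSpace F] [OpensMeasurableSpace F] {μ : Measure F} [IsProbabilityMeasure μ]
    (h : μ (Metric.sphere 0 1) = 1) : ∀ᵐ x ∂μ, ‖x‖ = 1 :=
  ((ae_iff_measure_eq Metric.isClosed_sphere.measurableSet.nullMeasurableSet).2
    (h.trans measure_univ.symm)).mono fun _ hx => mem_sphere_zero_iff_norm.1 hx

section Probability

open ProbabilityTheory Module Submodule

variable {E : Type*} [NormedAddCommGroup E] [InnerProductSpace ℝ E] [FiniteDimensional ℝ E]
  [MeasurableSpace E] [BorelSpace E]

theorem integral_norm_starProjection_sq_le (μ : Measure E) (K : Submodule ℝ E) {σ2 : ℝ}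
    (hint : Integrable (fun x => ‖x‖ ^ 2) μ)
    (hmom : ∀ θ : E, ‖θ‖ = 1 → ∫ x, ⟪x, θ⟫ ^ 2 ∂μ ≤ σ2) :
    ∫ x, ‖K.starProjection x‖ ^ 2 ∂μ ≤ finrank ℝ K * σ2 := by
  set b := stdOrthonormalBasis ℝ K
  have hb : ∀ i, ‖(b i : E)‖ = 1 := fun i => b.orthonormal.1 i
  have hparseval : ∀ x, ‖K.starProjection x‖ ^ 2 = ∑ i, ⟪x, (b i : E)⟫ ^ 2 := fun x => by
    rw [starProjection_apply]
    change ‖K.orthogonalProjectionOnto x‖ ^ 2 = _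
    rw [← b.sum_sq_inner_right]
    simp_rw [inner_orthogonalProjectionOnto_eq_of_mem_left, real_inner_comm]
  have hint_i : ∀ i, Integrable (fun x => ⟪x, (b i : E)⟫ ^ 2) μ := fun i =>
    hint.mono' (by fun_prop) (Filter.Eventually.of_forall fun x => by
      rw [Real.norm_eq_abs, abs_pow]
      gcongr
      simpa [hb i] using abs_real_inner_le_norm x (b i : E))
  simp_rw [hparseval]
  rw [integral_finsetSum _ fun i _ => hint_i i]
  calc ∑ i, ∫ x, ⟪x, (b i : E)⟫ ^ 2 ∂μ ≤ ∑ _i, σ2 := Finset.sum_le_sum fun i _ => hmom _ (hb i)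
    _ = finrank ℝ K * σ2 := by simp

theorem measure_le_norm_starProjection_le (μ : Measure E) [IsFiniteMeasure μ]
    (K : Submodule ℝ E) {σ2 t : ℝ} (ht : 0 < t) (hint : Integrable (fun x => ‖x‖ ^ 2) μ)
    (hmom : ∀ θ : E, ‖θ‖ = 1 → ∫ x, ⟪x, θ⟫ ^ 2 ∂μ ≤ σ2) :
    μ {x | t ≤ ‖K.starProjection x‖} ≤ ENNReal.ofReal (finrank ℝ K * σ2 / t ^ 2) := by
  have hint_proj : Integrable (fun x => ‖K.starProjection x‖ ^ 2) μ :=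
    hint.mono' (by fun_prop) (Filter.Eventually.of_forall fun x => by
      rw [Real.norm_eq_abs, abs_pow, abs_norm]
      gcongr
      exact K.norm_starProjection_apply_le x)
  have hmarkov := mul_meas_ge_le_integral_of_nonneg
    (Filter.Eventually.of_forall fun x => by positivity) hint_proj (t ^ 2)
  calc μ {x | t ≤ ‖K.starProjection x‖}
      ≤ μ {x | t ^ 2 ≤ ‖K.starProjection x‖ ^ 2} :=
        measure_mono <| Set.ofPred_subset_ofPred.2 fun _ hx => pow_le_pow_left₀ ht.le hx 2
    _ = ENNReal.ofReal (μ.real {x | t ^ 2 ≤ ‖K.starProjection x‖ ^ 2}) :=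
        (ofReal_measureReal (measure_ne_top μ _)).symm
    _ ≤ ENNReal.ofReal (finrank ℝ K * σ2 / t ^ 2) := by
        gcongr
        rw [le_div_iff₀' (by positivity)]
        exact hmarkov.trans (integral_norm_starProjection_sq_le μ K hint hmom)

variable {ι Ω : Type*} [Fintype ι] [LinearOrder ι] [LocallyFiniteOrderBot ι] [MeasurableSpace Ω]
  {P : Measure Ω} [IsProbabilityMeasure P] {μ : Measure E} [IsFiniteMeasure μ] {X : ι → Ω → E}
  {σ2 t : ℝ}

theorem measure_le_norm_starProjection_span_Iio_le (hXm : ∀ i, Measurable (X i))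
    (hindep : iIndepFun X P) (hlaw : ∀ i, P.map (X i) = μ)
    (hint : Integrable (fun x => ‖x‖ ^ 2) μ) (hmom : ∀ θ : E, ‖θ‖ = 1 → ∫ x, ⟪x, θ⟫ ^ 2 ∂μ ≤ σ2)
    (hσ2 : 0 ≤ σ2) (ht : 0 < t) (i : ι) :
    P {ω | t ≤ ‖(span ℝ ((X · ω) '' Set.Iio i)).starProjection (X i ω)‖} ≤
      ENNReal.ofReal (Fintype.card ι * σ2 / t ^ 2) := by
  set Y : Ω → Finset.Iio i → E := fun ω j => X j ω
  set S := {p : (Finset.Iio i → E) × E | t ≤ ‖(span ℝ (Set.range p.1)).starProjection p.2‖}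
  have hevent : {ω | t ≤ ‖(span ℝ ((X · ω) '' Set.Iio i)).starProjection (X i ω)‖} =
      (fun ω => (Y ω, X i ω)) ⁻¹' S := by
    ext ω
    simp only [S, Y, Set.mem_preimage, Set.mem_ofPred_eq, ← Finset.coe_Iio, Set.image_eq_range]
    rfl
  have hY : Measurable Y := measurable_pi_lambda _ fun j => hXm j
  have hYX : IndepFun Y (X i) P := by
    exact (hindep.indepFun_finset (Finset.Iio i) {i} (by simp) hXm).comp measurable_id
      (measurable_pi_apply ⟨i, Finset.mem_singleton_self i⟩)
  rw [hevent]
  refine hYX.measure_preimage_le_of_forall_slice_le hY (hXm i) (measurableSet_le measurable_const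
      measurable_starProjection_span_range.norm) fun y => ?_
  rw [hlaw]
  refine (measure_le_norm_starProjection_le μ (span ℝ (Set.range y)) ht hint hmom).trans ?_
  gcongr
  exact (finrank_range_le_card y).trans (Fintype.card_subtype_le _)

theorem one_sub_le_measure_forall_norm_starProjection_span_Iio_lt
    (hXm : ∀ i, Measurable (X i)) (hindep : iIndepFun X P) (hlaw : ∀ i, P.map (X i) = μ)
    (hint : Integrable (fun x => ‖x‖ ^ 2) μ) (hmom : ∀ θ : E, ‖θ‖ = 1 → ∫ x, ⟪x, θ⟫ ^ 2 ∂μ ≤ σ2)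
    (hσ2 : 0 ≤ σ2) (ht : 0 < t) :
    1 - ENNReal.ofReal (Fintype.card ι * (Fintype.card ι * σ2 / t ^ 2)) ≤
      P {ω | ∀ i, ‖(span ℝ ((X · ω) '' Set.Iio i)).starProjection (X i ω)‖ < t} := by
  set G := {ω | ∀ i, ‖(span ℝ ((X · ω) '' Set.Iio i)).starProjection (X i ω)‖ < t}
  have hGc : Gᶜ ⊆ ⋃ i, {ω | t ≤ ‖(span ℝ ((X · ω) '' Set.Iio i)).starProjection (X i ω)‖} :=
    fun ω hω => by simpa [G] using hω
  rw [tsub_le_iff_right, ← measure_univ (μ := P)]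
  calc P Set.univ ≤ P G + P Gᶜ := measure_univ_le_add_compl G
    _ ≤ P G + ∑ i, P {ω | t ≤ ‖(span ℝ ((X · ω) '' Set.Iio i)).starProjection (X i ω)‖} := by
        gcongr
        exact (measure_mono hGc).trans (measure_iUnion_fintype_le P _)
    _ ≤ P G + ∑ _i : ι, ENNReal.ofReal (Fintype.card ι * σ2 / t ^ 2) := by
        gcongr with i
        exact measure_le_norm_starProjection_span_Iio_le hXm hindep hlaw hint hmom hσ2 ht i
    _ = P G + ENNReal.ofReal (Fintype.card ι * (Fintype.card ι * σ2 / t ^ 2)) := by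
        rw [Finset.sum_const, Finset.card_univ, nsmul_eq_mul, ENNReal.ofReal_mul (by positivity),
          ENNReal.ofReal_natCast]

end Probability

theorem stmt9_general {n l : ℕ} (hl : 2 ≤ l)
    {Ω : Type*} [MeasurableSpace Ω] (P : Measure Ω) [IsProbabilityMeasure P]
    (μ : Measure (EuclideanSpace ℝ (Fin n))) [IsProbabilityMeasure μ]
    (hsph : μ (Metric.sphere (0 : EuclideanSpace ℝ (Fin n)) 1) = 1)
    (hmom : ∀ θ : EuclideanSpace ℝ (Fin n), ‖θ‖ = 1 →
      ∫ x, ⟪x, θ⟫ ^ 2 ∂μ ≤ (l : ℝ) ^ (-(50 : ℤ)))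
    (X : Fin l → Ω → EuclideanSpace ℝ (Fin n)) (hXm : ∀ i, Measurable (X i))
    (hindep : ProbabilityTheory.iIndepFun X P)
    (hlaw : ∀ i, P.map (X i) = μ) :
    1 - ENNReal.ofReal (4 * (l : ℝ) ^ (-(6 : ℤ))) ≤
        P {ω | ∀ i : Fin l, 1 ≤ (i : ℕ) →
          ‖(Submodule.orthogonalProjectionOnto
              (Submodule.span ℝ {v | ∃ j, j < i ∧ v = X j ω}) (X i ω) :
            EuclideanSpace ℝ (Fin n))‖ < (l : ℝ) ^ (-(21 : ℤ)) / 2}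
      ∧ 0 < P {ω | IsEpsOrthogonal ((l : ℝ) ^ (-(20 : ℤ)) / 2) (fun i => X i ω)} := by
  have hl2 : (2 : ℝ) ≤ l := by exact_mod_cast hl
  have hunit := ae_norm_eq_one_of_measure_sphere_eq_one hsph
  have hint : Integrable (fun x => ‖x‖ ^ 2) μ :=
    (integrable_const (1 : ℝ)).congr (hunit.mono fun x hx => by simp [hx])
  have hgood := one_sub_le_measure_forall_norm_starProjection_span_Iio_lt hXm hindep hlaw hint
    hmom (by positivity) (by positivity : (0 : ℝ) < l ^ (-(21 : ℤ)) / 2)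
  have hbound : (l : ℝ) * (l * l ^ (-(50 : ℤ)) / (l ^ (-(21 : ℤ)) / 2) ^ 2) =
      4 * l ^ (-(6 : ℤ)) := by
    simp only [zpow_neg, zpow_ofNat]
    field_simp
    ring
  rw [Fintype.card_fin, hbound] at hgood
  have hsmall : 4 * (l : ℝ) ^ (-(6 : ℤ)) < 1 := by
    rw [zpow_neg, zpow_ofNat, ← div_eq_mul_inv, div_lt_one (by positivity)]
    nlinarith [pow_le_pow_left₀ (by norm_num) hl2 6]
  have hspan : ∀ ω (i : Fin l), {v | ∃ j, j < i ∧ v = X j ω} = (X · ω) '' Set.Iio i :=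
    fun ω i => Set.ext fun _ => exists_congr fun _ => and_congr_right fun _ => eq_comm
  refine ⟨hgood.trans (measure_mono fun ω hω i _ => ?_), ?_⟩
  · rw [hspan, ← Submodule.starProjection_apply]
    exact hω i
  have hX_unit : ∀ᵐ ω ∂P, ∀ i, ‖X i ω‖ = 1 :=
    ae_all_iff.2 fun i => ae_of_ae_map (hXm i).aemeasurable (by rwa [hlaw i])
  calc (0 : ℝ≥0∞) < 1 - ENNReal.ofReal (4 * (l : ℝ) ^ (-(6 : ℤ))) :=
        tsub_pos_of_lt (ENNReal.ofReal_lt_one.2 hsmall)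
    _ ≤ _ := hgood
    _ ≤ _ := measure_mono_ae <| hX_unit.mono fun ω hunit_ω hω =>
        isEpsOrthogonal_of_norm_starProjection_lt_zpow hl _ hunit_ω hω

/-- If `μ` is a probability measure on `S^{n−1}` with `∫ (x·θ)² dμ ≤ ℓ^{−50}` for every
unit vector `θ`, and `X₁,…,X_ℓ` are i.i.d. with law `μ`, then with probability at least
`1 − 4ℓ^{−6}` every `X_i` (i ≥ 2) has projection of norm `< ℓ^{−21}/2` onto the span of
its predecessors; in particular, `(X₁,…,X_ℓ)` is `(ℓ^{−20}/2)`-orthogonal with positive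
probability. -/
theorem stmt9 {n l : ℕ} (hl : 2 ≤ l) (hn : 1 ≤ n)
    {Ω : Type*} [MeasurableSpace Ω] (P : Measure Ω) [IsProbabilityMeasure P]
    (μ : Measure (EuclideanSpace ℝ (Fin n))) [IsProbabilityMeasure μ]
    (hsph : μ (Metric.sphere (0 : EuclideanSpace ℝ (Fin n)) 1) = 1)
    (hmom : ∀ θ : EuclideanSpace ℝ (Fin n), ‖θ‖ = 1 →
      ∫ x, ⟪x, θ⟫ ^ 2 ∂μ ≤ (l : ℝ) ^ (-(50 : ℤ)))
    (X : Fin l → Ω → EuclideanSpace ℝ (Fin n)) (hXm : ∀ i, Measurable (X i))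
    (hindep : ProbabilityTheory.iIndepFun X P)
    (hlaw : ∀ i, P.map (X i) = μ) :
    1 - ENNReal.ofReal (4 * (l : ℝ) ^ (-(6 : ℤ))) ≤
        P {ω | ∀ i : Fin l, 1 ≤ (i : ℕ) →
          ‖(Submodule.orthogonalProjectionOnto
              (Submodule.span ℝ {v | ∃ j, j < i ∧ v = X j ω}) (X i ω) :
            EuclideanSpace ℝ (Fin n))‖ < (l : ℝ) ^ (-(21 : ℤ)) / 2}
      ∧ 0 < P {ω | IsEpsOrthogonal ((l : ℝ) ^ (-(20 : ℤ)) / 2) (fun i => X i ω)} :=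
  stmt9_general hl P μ hsph hmom X hXm hindep hlaw
end

section
/- Let μ be a Borel probability measure on the unit sphere S^{n−1} ⊂ ℝⁿ with μ(H) = 0 for every hyperplane H ⊂ ℝⁿ through the origin. Then there exists an invertible linear map T : ℝⁿ → ℝⁿ such that the pushforward of μ under x ↦ Tx/|Tx| is isotropic, i.e., ∫ (x·θ)² d((R∘T)_*μ)(x) = 1/n for every unit vector θ. -/
open MeasureTheory Filter Topology Metric Module
open scoped RealInnerProductSpace ENNReal

/-!
Minimise `Φ(T) = ∫ log ‖T x‖ dμ` (`logNormIntegral`) over the maps of determinant one.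
Since `μ` charges no hyperplane, compactness of the sphere gives a `δ > 0` such that every slab
`{|⟪x, e⟫| < δ}` has mass at most `1 / (2n)`. In an eigenbasis of `T†T`, the top eigenvalue
`M ≥ ‖T‖²` bounds `‖T x‖` from below off the slab around the top eigenvector, while `det T = 1`
gives `‖T x‖² ≥ M^{-(n-1)}` everywhere; hence `Φ(T) ≥ log δ + log ‖T‖ / 2`, and `Φ` attains its
minimum at some `A`. Comparing `A` with `S_s ∘ A`, where `S_s` multiplies the `θ`-component by `s`
(so `det S_s = s`), and using `log t ≤ t - 1` gives
`log s / n ≤ (s² - 1) / 2 · ∫ ⟪A x / ‖A x‖, θ⟫² dμ` for all `s > 0`. Both sides vanish at `s = 1`,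
so their derivatives there agree, which is the isotropy identity.
-/

theorem le_integral_of_ae_le_of_ae_mem_le {α : Type*} [MeasurableSpace α] {μ : Measure α}
    [IsProbabilityMeasure μ] {f : α → ℝ} (hf : Integrable f μ) {G : Set α} (hG : MeasurableSet G)
    {a b : ℝ} (hb : ∀ᵐ x ∂μ, b ≤ f x) (ha : ∀ᵐ x ∂μ, x ∈ G → a ≤ f x) :
    b + (a - b) * μ.real G ≤ ∫ x, f x ∂μ := by
  have hg : Integrable (fun x => b + G.indicator (fun _ => a - b) x) μ :=
    (integrable_const b).add ((integrable_const _).indicator hG)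
  calc b + (a - b) * μ.real G = ∫ x, (b + G.indicator (fun _ => a - b) x) ∂μ := by
        rw [integral_add (integrable_const b) ((integrable_const _).indicator hG),
          integral_indicator_const _ hG]
        simp [mul_comm]
    _ ≤ ∫ x, f x ∂μ := by
        refine integral_mono_ae hg hf ?_
        filter_upwards [ha, hb] with x hxa hxb
        by_cases hx : x ∈ G
        · simpa [hx] using hxa hx
        · simpa [hx] using hxb

theorem eq_of_forall_mul_log_le {a P : ℝ}
    (h : ∀ s : ℝ, 0 < s → a * Real.log s ≤ (s ^ 2 - 1) / 2 * P) : P = a := by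
  set f : ℝ → ℝ := fun s => (s ^ 2 - 1) / 2 * P - a * Real.log s
  have hmin : IsLocalMin f 1 := by
    filter_upwards [eventually_gt_nhds one_pos] with s hs
    simpa [f] using h s hs
  have hderiv : HasDerivAt f (P - a) 1 := by
    refine (((((hasDerivAt_pow 2 (1 : ℝ)).sub_const 1).div_const 2).mul_const P).sub
      ((Real.hasDerivAt_log one_ne_zero).const_mul a)).congr_deriv ?_
    norm_num
  linarith [hmin.hasDerivAt_eq_zero hderiv]

theorem one_le_mul_pow_card_sub_one_of_prod_eq_one {ι : Type*} [Fintype ι] {a : ι → ℝ} {M : ℝ}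
    (ha : ∀ i, 0 ≤ a i) (hM : ∀ i, a i ≤ M) (hprod : ∏ i, a i = 1) (j : ι) :
    1 ≤ a j * M ^ (Fintype.card ι - 1) := by
  classical
  calc (1 : ℝ) = a j * ∏ i ∈ Finset.univ.erase j, a i := by
        rw [Finset.mul_prod_erase _ _ (Finset.mem_univ j), hprod]
    _ ≤ a j * ∏ _i ∈ Finset.univ.erase j, M :=
        mul_le_mul_of_nonneg_left (Finset.prod_le_prod (fun i _ => ha i) fun i _ => hM i) (ha j)
    _ = a j * M ^ (Fintype.card ι - 1) := by
        rw [Finset.prod_const, Finset.card_erase_of_mem (Finset.mem_univ j), Finset.card_univ]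

theorem ContinuousLinearMap.det_comp {R M : Type*} [CommRing R] [TopologicalSpace M]
    [AddCommGroup M] [Module R M] (S A : M →L[R] M) : (S ∘L A).det = S.det * A.det :=
  LinearMap.det_comp _ _

theorem ContinuousLinearMap.det_smul {R M : Type*} [CommRing R] [TopologicalSpace M]
    [AddCommGroup M] [Module R M] [Module.Free R M] [ContinuousConstSMul R M] (c : R)
    (A : M →L[R] M) : (c • A).det = c ^ finrank R M * A.det :=
  LinearMap.det_smul _ _

theorem ContinuousLinearEquiv.exists_pos_eventually_mul_norm_le {𝕜 F G : Type*}
    [NontriviallyNormedField 𝕜] [NormedAddCommGroup F] [NormedSpace 𝕜 F]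
    [NormedAddCommGroup G] [NormedSpace 𝕜 G] (e : F ≃L[𝕜] G) :
    ∃ c > 0, ∀ᶠ S in 𝓝 (e : F →L[𝕜] G), ∀ x, c * ‖x‖ ≤ ‖S x‖ := by
  set K := ‖(e.symm : G →L[𝕜] F)‖ + 1
  have hK : 0 < K := by positivity
  have hinv : ∀ x, K⁻¹ * ‖x‖ ≤ ‖e x‖ := fun x => by
    rw [inv_mul_le_iff₀ hK]
    calc ‖x‖ = ‖(e.symm : G →L[𝕜] F) (e x)‖ := by simp
      _ ≤ ‖(e.symm : G →L[𝕜] F)‖ * ‖e x‖ := ContinuousLinearMap.le_opNorm _ _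
      _ ≤ K * ‖e x‖ := by gcongr; linarith
  refine ⟨(2 * K)⁻¹, by positivity, ?_⟩
  filter_upwards [ball_mem_nhds (e : F →L[𝕜] G) (by positivity : (0 : ℝ) < (2 * K)⁻¹)]
    with S hS x
  rw [mem_ball, dist_eq_norm] at hS
  have hdiff : ‖(S - e) x‖ ≤ (2 * K)⁻¹ * ‖x‖ := ((S - e).le_opNorm x).trans (by gcongr)
  have htri : ‖e x‖ ≤ ‖S x‖ + ‖(S - e) x‖ := by
    simpa using norm_sub_le (S x) ((S - e) x)
  have hK2 : K⁻¹ = 2 * (2 * K)⁻¹ := by field_simp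
  nlinarith [hinv x, norm_nonneg x]

section

variable {E : Type*} [NormedAddCommGroup E] [InnerProductSpace ℝ E]

theorem OrthonormalBasis.sum_repr_sq {ι : Type*} [Fintype ι] (b : OrthonormalBasis ι ℝ E)
    (x : E) : ∑ i, b.repr x i ^ 2 = ‖x‖ ^ 2 := by
  rw [← b.repr.norm_map x, EuclideanSpace.norm_sq_eq]
  simp_rw [Real.norm_eq_abs, sq_abs]

section Measure

variable [MeasurableSpace E] {μ : Measure E}

noncomputable def logNormIntegral (μ : Measure E) (T : E →L[ℝ] E) : ℝ :=
  ∫ x, Real.log ‖T x‖ ∂μ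

theorem logNormIntegral_id (hμ : ∀ᵐ x ∂μ, ‖x‖ = 1) :
    logNormIntegral μ (ContinuousLinearMap.id ℝ E) = 0 :=
  integral_eq_zero_of_ae (by filter_upwards [hμ] with x hx; simp [hx])

theorem tendsto_measure_abs_inner_lt [BorelSpace E] [IsFiniteMeasure μ] {e : E}
    (he : μ {x | ⟪x, e⟫ = 0} = 0) :
    Tendsto (fun δ : ℝ => μ {x | |⟪x, e⟫| < δ}) (𝓝[>] 0) (𝓝 0) := by
  have hinter : ⋂ δ > (0 : ℝ), {x : E | |⟪x, e⟫| < δ} = {x | ⟪x, e⟫ = 0} := by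
    ext x
    simp only [Set.mem_iInter, Set.mem_ofPred_eq]
    refine ⟨fun h => abs_nonpos_iff.1 (le_of_forall_pos_lt_add fun ε hε => ?_), fun h δ hδ => ?_⟩
    · simpa using h ε hε
    · simpa [h] using hδ
  rw [← he, ← hinter]
  exact tendsto_measure_biInter_gt
    (fun δ _ => (measurableSet_lt (by fun_prop) measurable_const).nullMeasurableSet)
    (fun _ _ _ hij _ hx => lt_of_lt_of_le hx hij) ⟨1, one_pos, measure_ne_top μ _⟩

end Measure

variable [FiniteDimensional ℝ E]

theorem ContinuousLinearMap.apply_ne_zero_of_det_ne_zero {A : E →L[ℝ] E} (hA : A.det ≠ 0)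
    {x : E} (hx : x ≠ 0) : A x ≠ 0 := by
  simpa using (A.toContinuousLinearEquivOfDetNeZero hA).map_ne_zero_iff.2 hx

noncomputable def stretchAlong (θ : E) (s : ℝ) : E →L[ℝ] E :=
  LinearMap.toContinuousLinearMap (LinearMap.transvection ((s - 1) • innerₛₗ ℝ θ) θ)

theorem stretchAlong_apply (θ : E) (s : ℝ) (x : E) :
    stretchAlong θ s x = x + ((s - 1) * ⟪θ, x⟫) • θ := by
  simp [stretchAlong, LinearMap.transvection.apply]

theorem det_stretchAlong {θ : E} (hθ : ‖θ‖ = 1) (s : ℝ) : (stretchAlong θ s).det = s := by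
  simp [stretchAlong, hθ]

theorem norm_stretchAlong_apply_sq {θ : E} (hθ : ‖θ‖ = 1) (s : ℝ) (x : E) :
    ‖stretchAlong θ s x‖ ^ 2 = ‖x‖ ^ 2 + (s ^ 2 - 1) * ⟪x, θ⟫ ^ 2 := by
  rw [stretchAlong_apply, norm_add_sq_real, norm_smul, real_inner_smul_right, real_inner_comm θ x,
    Real.norm_eq_abs, hθ]
  ring_nf
  rw [sq_abs]
  ring

theorem log_norm_stretchAlong_le {θ y : E} (hθ : ‖θ‖ = 1) (hy : y ≠ 0) {s : ℝ} (hs : 0 < s) :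
    Real.log ‖stretchAlong θ s y‖ ≤ Real.log ‖y‖ + (s ^ 2 - 1) / 2 * ⟪‖y‖⁻¹ • y, θ⟫ ^ 2 := by
  have hSy : stretchAlong θ s y ≠ 0 := (stretchAlong θ s).apply_ne_zero_of_det_ne_zero
    (by rw [det_stretchAlong hθ]; exact hs.ne') hy
  have hy' : 0 < ‖y‖ := norm_pos_iff.2 hy
  have h := Real.log_le_sub_one_of_pos
    (div_pos (pow_pos (norm_pos_iff.2 hSy) 2) (pow_pos hy' 2))
  rw [Real.log_div (by positivity) (by positivity), Real.log_pow, Real.log_pow,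
    norm_stretchAlong_apply_sq hθ] at h
  rw [real_inner_smul_left, mul_pow, inv_pow]
  have hratio : (‖y‖ ^ 2 + (s ^ 2 - 1) * ⟪y, θ⟫ ^ 2) / ‖y‖ ^ 2 - 1 =
      (s ^ 2 - 1) * ((‖y‖ ^ 2)⁻¹ * ⟪y, θ⟫ ^ 2) := by
    field_simp
    ring
  push_cast at h
  linarith

theorem LinearMap.norm_apply_sq_eq_sum_eigenvalues {F : Type*} [NormedAddCommGroup F]
    [InnerProductSpace ℝ F] [FiniteDimensional ℝ F] (T : E →ₗ[ℝ] F) (x : E) :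
    ‖T x‖ ^ 2 = ∑ i, T.isSymmetric_adjoint_comp_self.eigenvalues rfl i *
      (T.isSymmetric_adjoint_comp_self.eigenvectorBasis rfl).repr x i ^ 2 := by
  set hS := T.isSymmetric_adjoint_comp_self
  set b := hS.eigenvectorBasis rfl
  calc ‖T x‖ ^ 2 = ⟪b.repr ((adjoint T ∘ₗ T) x), b.repr x⟫ := by
        rw [LinearIsometryEquiv.inner_map_map, comp_apply, adjoint_inner_left,
          real_inner_self_eq_norm_sq]
    _ = _ := by
        simp only [PiLp.inner_apply, hS.eigenvectorBasis_apply_self_apply, b]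
        exact Finset.sum_congr rfl fun i _ => by simp; ring

theorem LinearMap.prod_eigenvalues_adjoint_comp_self (T : E →ₗ[ℝ] E) :
    ∏ i, T.isSymmetric_adjoint_comp_self.eigenvalues rfl i = T.det ^ 2 := by
  have := T.isSymmetric_adjoint_comp_self.det_eq_prod_eigenvalues rfl
  rw [← T.normDet_sq, T.normDet_eq_abs_det, sq_abs] at this
  simpa using this.symm

theorem ContinuousLinearMap.exists_norm_apply_sq_bounds_of_det_eq_one [Nontrivial E]
    {T : E →L[ℝ] E} (hT : T.det = 1) :
    ∃ M : ℝ, ∃ v : E, ‖v‖ = 1 ∧ 1 ≤ M ∧ ‖T‖ ^ 2 ≤ M ∧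
      ∀ x, M * ⟪v, x⟫ ^ 2 ≤ ‖T x‖ ^ 2 ∧ ‖x‖ ^ 2 ≤ M ^ (finrank ℝ E - 1) * ‖T x‖ ^ 2 := by
  set L : E →ₗ[ℝ] E := T.toLinearMap
  set hS := L.isSymmetric_adjoint_comp_self
  set ev := hS.eigenvalues rfl
  set b := hS.eigenvectorBasis rfl
  set i₀ : Fin (finrank ℝ E) := ⟨0, finrank_pos⟩
  have hev_nonneg : ∀ i, 0 ≤ ev i := L.isPositive_adjoint_comp_self.nonneg_eigenvalues rfl
  have hev_le : ∀ i, ev i ≤ ev i₀ := fun i => hS.eigenvalues_antitone rfl (Nat.zero_le i.val)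
  have hprod : ∏ i, ev i = 1 := by
    rw [L.prod_eigenvalues_adjoint_comp_self, show LinearMap.det L = T.det from rfl, hT, one_pow]
  have hev_low : ∀ i, 1 ≤ ev i * ev i₀ ^ (finrank ℝ E - 1) := fun i => by
    simpa using one_le_mul_pow_card_sub_one_of_prod_eq_one hev_nonneg hev_le hprod i
  have hnorm : ∀ x, ‖T x‖ ^ 2 = ∑ i, ev i * b.repr x i ^ 2 := L.norm_apply_sq_eq_sum_eigenvalues
  refine ⟨ev i₀, b i₀, b.orthonormal.1 i₀, ?_, ?_, fun x => ⟨?_, ?_⟩⟩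
  · have h := hev_low i₀
    rw [← pow_succ', Nat.sub_add_cancel finrank_pos] at h
    exact (one_le_pow_iff_of_nonneg (hev_nonneg i₀) finrank_pos.ne').1 h
  · have hsqrt : ‖T‖ ≤ √(ev i₀) := T.opNorm_le_bound (Real.sqrt_nonneg _) fun x => by
      refine (pow_le_pow_iff_left₀ (norm_nonneg _) (by positivity) two_ne_zero).1 ?_
      rw [mul_pow, Real.sq_sqrt (hev_nonneg i₀), hnorm, ← b.sum_repr_sq, Finset.mul_sum]
      gcongr with i
      exact hev_le i
    calc ‖T‖ ^ 2 ≤ √(ev i₀) ^ 2 := by gcongr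
      _ = ev i₀ := Real.sq_sqrt (hev_nonneg i₀)
  · rw [hnorm, ← b.repr_apply_apply]
    exact Finset.single_le_sum (f := fun i => ev i * b.repr x i ^ 2)
      (fun i _ => mul_nonneg (hev_nonneg i) (sq_nonneg _)) (Finset.mem_univ i₀)
  · rw [hnorm, ← b.sum_repr_sq, Finset.mul_sum]
    gcongr with i
    nlinarith [hev_low i, sq_nonneg (b.repr x i)]

theorem ContinuousLinearMap.exists_log_norm_apply_bounds_of_det_eq_one [Nontrivial E]
    {T : E →L[ℝ] E} (hT : T.det = 1) :
    ∃ L : ℝ, ∃ v : E, ‖v‖ = 1 ∧ 0 ≤ L ∧ Real.log ‖T‖ ≤ L ∧ ∀ x, ‖x‖ = 1 →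
      -(((finrank ℝ E : ℝ) - 1) * L) ≤ Real.log ‖T x‖ ∧
      ∀ δ, 0 < δ → δ ≤ |⟪x, v⟫| → Real.log δ + L ≤ Real.log ‖T x‖ := by
  obtain ⟨M, v, hv, hM1, hTM, hbounds⟩ := T.exists_norm_apply_sq_bounds_of_det_eq_one hT
  have hM : 0 < M := by linarith
  have hTx : ∀ x : E, x ≠ 0 → 0 < ‖T x‖ := fun x hx =>
    norm_pos_iff.2 (T.apply_ne_zero_of_det_ne_zero (ne_of_eq_of_ne hT one_ne_zero) hx)
  refine ⟨Real.log M / 2, v, hv, by have := Real.log_nonneg hM1; positivity, ?_,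
    fun x hx => ⟨?_, fun δ hδ hxδ => ?_⟩⟩
  · obtain ⟨x, hx⟩ := exists_ne (0 : E)
    have hTpos : 0 < ‖T‖ := norm_pos_iff.2 fun h => (hTx x hx).ne' (by simp [h])
    have h := Real.log_le_log (by positivity) hTM
    rw [Real.log_pow] at h
    push_cast at h
    linarith
  · have hTx := hTx x (norm_ne_zero_iff.1 (by simp [hx]))
    have h := Real.log_le_log one_pos (by simpa [hx] using (hbounds x).2)
    rw [Real.log_one, Real.log_mul (by positivity) (by positivity), Real.log_pow, Real.log_pow,
      Nat.cast_sub finrank_pos] at h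
    push_cast at h
    linarith
  · have hTx := hTx x (norm_ne_zero_iff.1 (by simp [hx]))
    have hδsq : δ ^ 2 ≤ ⟪v, x⟫ ^ 2 := by
      rw [real_inner_comm, ← sq_abs ⟪x, v⟫]; exact pow_le_pow_left₀ hδ.le hxδ 2
    have h := Real.log_le_log (by positivity)
      ((mul_le_mul_of_nonneg_left hδsq hM.le).trans (hbounds x).1)
    rw [Real.log_mul hM.ne' (by positivity), Real.log_pow, Real.log_pow] at h
    push_cast at h
    linarith

variable [MeasurableSpace E] {μ : Measure E}

theorem exists_eventually_ae_abs_log_norm_apply_le (hμ : ∀ᵐ x ∂μ, ‖x‖ = 1) {A : E →L[ℝ] E}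
    (hA : A.det ≠ 0) : ∃ C, ∀ᶠ S in 𝓝 A, ∀ᵐ x ∂μ, |Real.log ‖S x‖| ≤ C := by
  obtain ⟨c, hc, hlow⟩ := (A.toContinuousLinearEquivOfDetNeZero hA).exists_pos_eventually_mul_norm_le
  rw [ContinuousLinearMap.coe_toContinuousLinearEquivOfDetNeZero] at hlow
  refine ⟨max |Real.log c| |Real.log (‖A‖ + 1)|, ?_⟩
  filter_upwards [hlow, (continuous_norm.tendsto A).eventually (gt_mem_nhds (lt_add_one ‖A‖))]
    with S hSlow hSnorm
  filter_upwards [hμ] with x hx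
  have hlo : c ≤ ‖S x‖ := by simpa [hx] using hSlow x
  have hhi : ‖S x‖ ≤ ‖A‖ + 1 := (S.le_opNorm x).trans (by rw [hx, mul_one]; exact hSnorm.le)
  exact abs_le_max_abs_abs (Real.log_le_log hc hlo) (Real.log_le_log (hc.trans_le hlo) hhi)

variable [BorelSpace E]

theorem eventually_forall_sphere_measure_abs_inner_lt_le [IsFiniteMeasure μ]
    (hμ : ∀ᵐ x ∂μ, ‖x‖ ≤ 1) (hhyp : ∀ θ : E, θ ≠ 0 → μ {x | ⟪x, θ⟫ = 0} = 0)
    {ε : ℝ≥0∞} (hε : 0 < ε) :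
    ∀ᶠ δ in 𝓝 (0 : ℝ), ∀ e ∈ sphere (0 : E) 1, μ {x | |⟪x, e⟫| < δ} ≤ ε := by
  refine (isCompact_sphere 0 1).eventually_forall_of_forall_eventually fun e he => ?_
  obtain ⟨δ₀, hsmall, hδ₀⟩ := (((tendsto_measure_abs_inner_lt
    (hhyp e (ne_of_mem_sphere he one_ne_zero))).eventually (gt_mem_nhds hε)).and
    self_mem_nhdsWithin).exists
  have hδ₀' : (0 : ℝ) < δ₀ / 2 := half_pos hδ₀
  rw [nhds_prod_eq]
  filter_upwards [prod_mem_prod (Ioo_mem_nhds (neg_lt_zero.2 hδ₀') hδ₀') (ball_mem_nhds e hδ₀')]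
    with ⟨δ, e'⟩ ⟨hδ, he'⟩
  -- a thin slab about a direction `e'` near `e` lies in the slab of width `δ₀` about `e`
  refine le_trans (measure_mono_ae ?_) hsmall.le
  filter_upwards [hμ] with x hx hxδ
  have hsplit : ⟪x, e⟫ = ⟪x, e'⟫ + ⟪x, e - e'⟫ := by rw [← inner_add_right, add_sub_cancel]
  have hclose : |⟪x, e - e'⟫| < δ₀ / 2 := by
    calc |⟪x, e - e'⟫| ≤ ‖x‖ * ‖e - e'‖ := abs_real_inner_le_norm _ _
      _ ≤ 1 * ‖e - e'‖ := by gcongr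
      _ < δ₀ / 2 := by rw [one_mul, ← dist_eq_norm, dist_comm]; exact he'
  have hxδ' : |⟪x, e'⟫| < δ := hxδ
  show |⟪x, e⟫| < δ₀
  calc |⟪x, e⟫| ≤ |⟪x, e'⟫| + |⟪x, e - e'⟫| := hsplit ▸ abs_add_le _ _
    _ < δ₀ := by linarith [hδ.2]

theorem integrable_log_norm_apply [IsFiniteMeasure μ] (hμ : ∀ᵐ x ∂μ, ‖x‖ = 1)
    {A : E →L[ℝ] E} (hA : A.det ≠ 0) : Integrable (fun x => Real.log ‖A x‖) μ := by
  obtain ⟨C, hC⟩ := exists_eventually_ae_abs_log_norm_apply_le hμ hA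
  exact Integrable.of_bound (A.continuous.norm.measurable.log.aestronglyMeasurable) C
    hC.self_of_nhds

theorem continuousAt_logNormIntegral [IsFiniteMeasure μ] (hμ : ∀ᵐ x ∂μ, ‖x‖ = 1)
    {A : E →L[ℝ] E} (hA : A.det ≠ 0) : ContinuousAt (logNormIntegral μ) A := by
  obtain ⟨C, hC⟩ := exists_eventually_ae_abs_log_norm_apply_le hμ hA
  refine continuousAt_of_dominated
    (Eventually.of_forall fun S => S.continuous.norm.measurable.log.aestronglyMeasurable) hC
    (integrable_const C) ?_
  filter_upwards [hμ] with x hx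
  have hAx : A x ≠ 0 := A.apply_ne_zero_of_det_ne_zero hA (norm_ne_zero_iff.1 (by simp [hx]))
  exact (continuous_eval_const x).norm.continuousAt.log (norm_ne_zero_iff.2 hAx)

theorem logNormIntegral_smul [IsProbabilityMeasure μ] (hμ : ∀ᵐ x ∂μ, ‖x‖ = 1)
    {T : E →L[ℝ] E} (hT : T.det ≠ 0) {c : ℝ} (hc : 0 < c) :
    logNormIntegral μ (c • T) = Real.log c + logNormIntegral μ T := by
  have hsplit : ∀ᵐ x ∂μ, Real.log ‖(c • T) x‖ = Real.log c + Real.log ‖T x‖ := by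
    filter_upwards [hμ] with x hx
    have hTx : T x ≠ 0 := T.apply_ne_zero_of_det_ne_zero hT (norm_ne_zero_iff.1 (by simp [hx]))
    rw [smul_apply, norm_smul, Real.norm_of_nonneg hc.le,
      Real.log_mul hc.ne' (norm_ne_zero_iff.2 hTx)]
  rw [logNormIntegral, integral_congr_ae hsplit,
    integral_add (integrable_const _) (integrable_log_norm_apply hμ hT)]
  simp [logNormIntegral]

theorem log_add_half_log_opNorm_le_logNormIntegral [Nontrivial E] [IsProbabilityMeasure μ]
    (hμ : ∀ᵐ x ∂μ, ‖x‖ = 1) {δ : ℝ} (hδ : 0 < δ) (hδ1 : δ ≤ 1)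
    (hslab : ∀ e : E, ‖e‖ = 1 → μ.real {x | |⟪x, e⟫| < δ} ≤ 1 / (2 * finrank ℝ E))
    {T : E →L[ℝ] E} (hT : T.det = 1) :
    Real.log δ + Real.log ‖T‖ / 2 ≤ logNormIntegral μ T := by
  obtain ⟨L, v, hv, hL, hTL, hbounds⟩ := T.exists_log_norm_apply_bounds_of_det_eq_one hT
  set n : ℝ := (finrank ℝ E : ℝ)
  have hn : 1 ≤ n := Nat.one_le_cast.2 finrank_pos
  set G := {x : E | δ ≤ |⟪x, v⟫|}
  have hG : MeasurableSet G := measurableSet_le measurable_const (by fun_prop)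
  have hμG : 1 - 1 / (2 * n) ≤ μ.real G := by
    have hc : Gᶜ = {x | |⟪x, v⟫| < δ} := by ext; simp [G]
    have := probReal_compl_eq_one_sub hG (μ := μ)
    rw [hc] at this
    linarith [hslab v hv]
  have hlow : ∀ᵐ x ∂μ, Real.log δ - (n - 1) * L ≤ Real.log ‖T x‖ := by
    filter_upwards [hμ] with x hx
    linarith [(hbounds x hx).1, Real.log_nonpos hδ.le hδ1]
  have hhigh : ∀ᵐ x ∂μ, x ∈ G → Real.log δ + L ≤ Real.log ‖T x‖ := by
    filter_upwards [hμ] with x hx hxG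
    linarith [(hbounds x hx).2 δ hδ hxG]
  have hint := le_integral_of_ae_le_of_ae_mem_le
    (integrable_log_norm_apply hμ (ne_of_eq_of_ne hT one_ne_zero)) hG hlow hhigh
  have hgap : n * L * (1 - 1 / (2 * n)) ≤ n * L * μ.real G :=
    mul_le_mul_of_nonneg_left hμG (by positivity)
  have hval : n * L * (1 - 1 / (2 * n)) = n * L - L / 2 := by field_simp
  rw [logNormIntegral]
  linarith

theorem exists_isMinOn_logNormIntegral [Nontrivial E] [IsProbabilityMeasure μ]
    (hμ : ∀ᵐ x ∂μ, ‖x‖ = 1) (hhyp : ∀ θ : E, θ ≠ 0 → μ {x | ⟪x, θ⟫ = 0} = 0) :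
    ∃ A : E →L[ℝ] E, A.det = 1 ∧ IsMinOn (logNormIntegral μ) {T | T.det = 1} A := by
  have hn : (0 : ℝ) < finrank ℝ E := by exact_mod_cast finrank_pos
  obtain ⟨δ, hslab, hδ, hδ1⟩ := (((eventually_forall_sphere_measure_abs_inner_lt_le
    (hμ.mono fun x hx => hx.le) hhyp (ENNReal.ofReal_pos.2 (by positivity :
      (0 : ℝ) < 1 / (2 * finrank ℝ E)))).filter_mono nhdsWithin_le_nhds).and
    (Ioc_mem_nhdsGT one_pos)).exists
  have hslab' : ∀ e : E, ‖e‖ = 1 → μ.real {x | |⟪x, e⟫| < δ} ≤ 1 / (2 * finrank ℝ E) :=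
    fun e he => ENNReal.toReal_le_of_le_ofReal (by positivity)
      (hslab e (mem_sphere_zero_iff_norm.2 he))
  -- beyond radius `δ⁻²` the coercivity bound makes `Φ` positive, while `Φ id = 0`
  set R := δ⁻¹ ^ 2
  set K := {T : E →L[ℝ] E | T.det = 1} ∩ closedBall 0 R
  have hK : IsCompact K := (isCompact_closedBall 0 R).inter_left
    (isClosed_eq ContinuousLinearMap.continuous_det continuous_const)
  have hid : ContinuousLinearMap.id ℝ E ∈ K :=
    ⟨by simp [ContinuousLinearMap.det], by simpa [R] using one_le_pow₀ ((one_le_inv₀ hδ).2 hδ1)⟩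
  obtain ⟨A, hAK, hAmin⟩ := hK.exists_isMinOn ⟨_, hid⟩ fun T hT =>
    (continuousAt_logNormIntegral hμ (ne_of_eq_of_ne hT.1 one_ne_zero)).continuousWithinAt
  refine ⟨A, hAK.1, isMinOn_iff.2 fun T hT => ?_⟩
  by_cases hTR : ‖T‖ ≤ R
  · exact hAmin ⟨hT, mem_closedBall_zero_iff.2 hTR⟩
  · have hcoer := log_add_half_log_opNorm_le_logNormIntegral hμ hδ hδ1 hslab' hT
    have hlogR : Real.log R < Real.log ‖T‖ := Real.log_lt_log (by positivity) (not_le.1 hTR)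
    have hR : Real.log R = -2 * Real.log δ := by simp [R, Real.log_pow, Real.log_inv]
    have hA : logNormIntegral μ A ≤ logNormIntegral μ (ContinuousLinearMap.id ℝ E) := hAmin hid
    rw [logNormIntegral_id hμ] at hA
    linarith

theorem IsMinOn.logNormIntegral_add_log_det_div_le [Nontrivial E] [IsProbabilityMeasure μ]
    (hμ : ∀ᵐ x ∂μ, ‖x‖ = 1) {A : E →L[ℝ] E} (hA : A.det = 1)
    (hmin : IsMinOn (logNormIntegral μ) {T | T.det = 1} A) {S : E →L[ℝ] E} (hS : 0 < S.det) :
    logNormIntegral μ A + Real.log S.det / finrank ℝ E ≤ logNormIntegral μ (S ∘L A) := by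
  have hn : (finrank ℝ E : ℝ) ≠ 0 := by exact_mod_cast finrank_pos.ne'
  -- rescale `S ∘L A` back to determinant one
  set c := S.det ^ (-(1 / finrank ℝ E : ℝ))
  have hc : 0 < c := Real.rpow_pos_of_pos hS _
  have hcn : c ^ finrank ℝ E = S.det⁻¹ := by
    rw [← Real.rpow_natCast, ← Real.rpow_mul hS.le, neg_mul, one_div_mul_cancel hn,
      Real.rpow_neg_one]
  have hSA : (S ∘L A).det = S.det := by rw [ContinuousLinearMap.det_comp, hA, mul_one]
  have hdet : (c • (S ∘L A)).det = 1 := by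
    rw [ContinuousLinearMap.det_smul, hSA, hcn, inv_mul_cancel₀ hS.ne']
  have h : logNormIntegral μ A ≤ logNormIntegral μ (c • (S ∘L A)) := hmin hdet
  rw [logNormIntegral_smul hμ (by rw [hSA]; exact hS.ne') hc, Real.log_rpow hS] at h
  have : -(1 / (finrank ℝ E : ℝ)) * Real.log S.det = -(Real.log S.det / finrank ℝ E) := by ring
  linarith

theorem IsMinOn.integral_inner_sq_eq_inv_finrank [Nontrivial E] [IsProbabilityMeasure μ]
    (hμ : ∀ᵐ x ∂μ, ‖x‖ = 1) {A : E →L[ℝ] E} (hA : A.det = 1)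
    (hmin : IsMinOn (logNormIntegral μ) {T | T.det = 1} A) {θ : E} (hθ : ‖θ‖ = 1) :
    ∫ x, ⟪‖A x‖⁻¹ • A x, θ⟫ ^ 2 ∂μ = 1 / finrank ℝ E := by
  have hA0 : A.det ≠ 0 := by simp [hA]
  have hAx : ∀ᵐ x ∂μ, A x ≠ 0 := by
    filter_upwards [hμ] with x hx
    exact A.apply_ne_zero_of_det_ne_zero hA0 (norm_ne_zero_iff.1 (by simp [hx]))
  have hunit : ∀ᵐ x ∂μ, ‖‖A x‖⁻¹ • A x‖ = 1 := by
    filter_upwards [hAx] with x hx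
    simpa using norm_smul_inv_norm (𝕜 := ℝ) hx
  set p : E → ℝ := fun x => ⟪‖A x‖⁻¹ • A x, θ⟫ ^ 2
  have hp : Integrable p μ := by
    refine Integrable.of_bound (by fun_prop) 1 ?_
    filter_upwards [hunit] with x hx
    have := abs_real_inner_le_norm (‖A x‖⁻¹ • A x) θ
    rw [hx, hθ, one_mul] at this
    simpa [p] using this
  refine eq_of_forall_mul_log_le fun s hs => ?_
  have hcomp := hmin.logNormIntegral_add_log_det_div_le hμ hA
    (S := stretchAlong θ s) (by rw [det_stretchAlong hθ]; exact hs)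
  rw [det_stretchAlong hθ] at hcomp
  have hSA0 : (stretchAlong θ s ∘L A).det ≠ 0 := by
    rw [ContinuousLinearMap.det_comp, det_stretchAlong hθ, hA, mul_one]; exact hs.ne'
  have hupper : logNormIntegral μ (stretchAlong θ s ∘L A) ≤
      logNormIntegral μ A + (s ^ 2 - 1) / 2 * ∫ x, p x ∂μ := by
    rw [← integral_const_mul, logNormIntegral, logNormIntegral,
      ← integral_add (integrable_log_norm_apply hμ hA0) (hp.const_mul _)]
    refine integral_mono_ae (integrable_log_norm_apply hμ hSA0)
      ((integrable_log_norm_apply hμ hA0).add (hp.const_mul _)) ?_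
    filter_upwards [hAx] with x hx
    exact log_norm_stretchAlong_le hθ hx hs
  rw [one_div_mul_eq_div]
  linarith

end

/-- For a probability measure `μ` on `S^{n−1}` giving zero mass to every hyperplane
through the origin, there is an invertible linear map `T` such that the pushforward of
`μ` under `x ↦ Tx/|Tx|` is isotropic: `∫ (R(Tx)·θ)² dμ(x) = 1/n` for all unit `θ`. -/
theorem stmt10 {n : ℕ} (hn : 1 ≤ n)
    (μ : Measure (EuclideanSpace ℝ (Fin n))) [IsProbabilityMeasure μ]
    (hsph : μ (Metric.sphere (0 : EuclideanSpace ℝ (Fin n)) 1) = 1)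
    (hhyp : ∀ θ : EuclideanSpace ℝ (Fin n), θ ≠ 0 → μ {x | ⟪x, θ⟫ = 0} = 0) :
    ∃ T : EuclideanSpace ℝ (Fin n) ≃ₗ[ℝ] EuclideanSpace ℝ (Fin n),
      ∀ θ : EuclideanSpace ℝ (Fin n), ‖θ‖ = 1 →
        ∫ x, ⟪‖T x‖⁻¹ • T x, θ⟫ ^ 2 ∂μ = 1 / n := by
  have : NeZero n := ⟨by omega⟩
  have hμ : ∀ᵐ x ∂μ, ‖x‖ = 1 := by
    have h := (ae_mem_iff_measure_eq (s := sphere (0 : EuclideanSpace ℝ (Fin n)) 1)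
      isClosed_sphere.measurableSet.nullMeasurableSet).2 (by rw [hsph, measure_univ])
    simpa using h
  obtain ⟨A, hA, hmin⟩ := exists_isMinOn_logNormIntegral hμ hhyp
  refine ⟨(A.toContinuousLinearEquivOfDetNeZero (by simp [hA])).toLinearEquiv, fun θ hθ => ?_⟩
  simpa using hmin.integral_inner_sq_eq_inv_finrank hμ hA hθ
end

section
/- Let n ≥ 1 be an integer, 0 < a ≤ 1, and let μ be a Borel probability measure on ℝⁿ. Then there are only finitely many linear subspaces E ⊆ ℝⁿ that are a-basic for μ, where E is a-basic if μ(E) ≥ a and μ(F) < a for every proper subspace F ⊊ E. -/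
/-
Suppose there are infinitely many `a`-basic subspaces `E k`. By compactness of the Grassmannian, a
subsequence of equidimensional ones converges to a subspace `V`, in the sense that the `E k`
eventually lie in every conical neighbourhood `V.cone ε`. These cones shrink to `V`, so the
intersections `E k ⊓ V` still carry mass asymptotically at least `a`. If `E k ⊓ V = V`
infinitely often, then `V ≤ E k` has measure `≥ a`, which by basicness forces `V = E k` for
infinitely many distinct `k`; otherwise the intersections have smaller dimension and we induct.
-/

open MeasureTheory

/-- A subspace `E` is `a`-basic for `μ` if `μ(E) ≥ a` while `μ(F) < a` for every proper
subspace `F ⊊ E`. -/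
def IsBasic {n : ℕ} (μ : Measure (EuclideanSpace ℝ (Fin n))) (a : ℝ)
    (E : Submodule ℝ (EuclideanSpace ℝ (Fin n))) : Prop :=
  ENNReal.ofReal a ≤ μ (↑E : Set (EuclideanSpace ℝ (Fin n))) ∧
    ∀ F : Submodule ℝ (EuclideanSpace ℝ (Fin n)), F < E →
      μ (↑F : Set (EuclideanSpace ℝ (Fin n))) < ENNReal.ofReal a

open Filter Metric Module Set Topology
open scoped ENNReal

theorem exists_strictMono_forall_eq_of_finite_range {α : Type*} {f : ℕ → α}
    (hf : (range f).Finite) :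
    ∃ φ : ℕ → ℕ, StrictMono φ ∧ ∃ a, ∀ k, f (φ k) = a := by
  have : Finite (range f) := hf
  obtain ⟨⟨a, _⟩, ha⟩ := Finite.exists_infinite_fiber (rangeFactorization f)
  have hfreq : ∃ᶠ k in atTop, f k = a := by
    refine Nat.frequently_atTop_iff_infinite.2 (Set.infinite_coe_iff.1 ?_)
    convert ha using 2
    ext n
    simp [rangeFactorization, Subtype.ext_iff]
  obtain ⟨φ, hφ, hφa⟩ := extraction_of_frequently_atTop hfreq
  exact ⟨φ, hφ, a, hφa⟩

variable {X : Type*} [NormedAddCommGroup X] [InnerProductSpace ℝ X]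

theorem infDist_span_le_of_mem {ι : Type*} [Fintype ι] {F : Submodule ℝ X}
    (b : OrthonormalBasis ι ℝ F) (v : ι → X) {x : X} (hx : x ∈ F) :
    infDist x (Submodule.span ℝ (range v)) ≤ (∑ i, ‖(b i : X) - v i‖) * ‖x‖ := by
  set y := ∑ i, inner ℝ (b i : X) x • v i
  have hy : y ∈ Submodule.span ℝ (range v) :=
    Submodule.sum_mem _ fun i _ => Submodule.smul_mem _ _ (Submodule.subset_span (mem_range_self i))
  have hx_eq : ∑ i, inner ℝ (b i : X) x • (b i : X) = x := by
    simpa using congrArg Subtype.val (b.sum_repr' ⟨x, hx⟩)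
  have hxy : x - y = ∑ i, inner ℝ (b i : X) x • ((b i : X) - v i) := by
    simp only [y, smul_sub, Finset.sum_sub_distrib, hx_eq]
  calc infDist x (Submodule.span ℝ (range v)) ≤ ‖x - y‖ :=
        (infDist_le_dist_of_mem hy).trans_eq (dist_eq_norm x y)
    _ ≤ ∑ i, ‖(b i : X) - v i‖ * ‖x‖ := by
        rw [hxy]
        refine norm_sum_le_of_le _ fun i _ => ?_
        rw [norm_smul, mul_comm]
        have hbi : ‖(b i : X)‖ = 1 := b.orthonormal.1 i
        gcongr
        simpa [hbi] using abs_real_inner_le_norm (b i : X) x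
    _ = (∑ i, ‖(b i : X) - v i‖) * ‖x‖ := (Finset.sum_mul ..).symm

theorem isCompact_setOf_orthonormal [FiniteDimensional ℝ X] (ι : Type*) [Fintype ι] :
    IsCompact {v : ι → X | Orthonormal ℝ v} := by
  classical
  refine isCompact_of_isClosed_isBounded ?_ (isBounded_closedBall (x := 0) (r := 1) |>.subset ?_)
  · simp only [orthonormal_iff_ite, ofPred_forall]
    exact isClosed_iInter fun i => isClosed_iInter fun j =>
      isClosed_eq (by fun_prop) continuous_const
  · intro v hv
    rw [mem_closedBall_zero_iff]
    exact pi_norm_le_iff_of_nonneg zero_le_one |>.2 fun i => (hv.1 i).le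

namespace Submodule

def cone (V : Submodule ℝ X) (ε : ℝ) : Set X := {x | infDist x V ≤ ε * ‖x‖}

variable (V : Submodule ℝ X)

theorem isClosed_cone (ε : ℝ) : IsClosed (V.cone ε) :=
  isClosed_le (continuous_infDist_pt _) (continuous_const.mul continuous_norm)

theorem cone_mono {ε δ : ℝ} (h : ε ≤ δ) : V.cone ε ⊆ V.cone δ :=
  fun x hx => hx.trans (mul_le_mul_of_nonneg_right h (norm_nonneg x))

variable [FiniteDimensional ℝ X]

theorem mem_of_forall_mem_cone {x : X} (h : ∀ ε > 0, x ∈ V.cone ε) : x ∈ V := by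
  refine (V.closed_of_finiteDimensional.mem_iff_infDist_zero ⟨0, V.zero_mem⟩).2 ?_
  refine le_antisymm (le_of_forall_pos_le_add fun δ hδ => ?_) infDist_nonneg
  calc infDist x V ≤ δ / (‖x‖ + 1) * ‖x‖ := h _ (by positivity)
    _ ≤ 0 + δ := by
        rw [zero_add, div_mul_eq_mul_div, div_le_iff₀ (by positivity)]
        nlinarith [norm_nonneg x]

theorem exists_strictMono_finrank_eq (F : ℕ → Submodule ℝ X) :
    ∃ φ : ℕ → ℕ, StrictMono φ ∧ ∃ d, ∀ k, finrank ℝ (F (φ k)) = d :=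
  exists_strictMono_forall_eq_of_finite_range <| (finite_Iic (finrank ℝ X)).subset <|
    range_subset_iff.2 fun k => (F k).finrank_le

theorem exists_strictMono_subset_cone (F : ℕ → Submodule ℝ X) {d : ℕ}
    (hF : ∀ k, finrank ℝ (F k) = d) :
    ∃ φ : ℕ → ℕ, StrictMono φ ∧ ∃ V : Submodule ℝ X, finrank ℝ V = d ∧
      ∀ ε > 0, ∀ᶠ k in atTop, (F (φ k) : Set X) ⊆ V.cone ε := by
  let b k : OrthonormalBasis (Fin d) ℝ (F k) :=
    (stdOrthonormalBasis ℝ (F k)).reindex (finCongr (hF k))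
  have hb k : Orthonormal ℝ fun i => (b k i : X) :=
    (b k).orthonormal.comp_linearIsometry (F k).subtypeₗᵢ
  obtain ⟨v, hv, φ, hφ, hlim⟩ := (isCompact_setOf_orthonormal (Fin d)).tendsto_subseq hb
  refine ⟨φ, hφ, span ℝ (range v), ?_, fun ε hε => ?_⟩
  · rw [finrank_span_eq_card hv.linearIndependent, Fintype.card_fin]
  have hsum : Tendsto (fun k => ∑ i, ‖(b (φ k) i : X) - v i‖) atTop (𝓝 0) := by
    simpa using tendsto_finsetSum _ fun i _ => ((tendsto_pi_nhds.1 hlim i).sub_const (v i)).norm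
  filter_upwards [hsum.eventually_lt_const hε] with k hk x hx
  exact (infDist_span_le_of_mem (b (φ k)) v hx).trans (by gcongr)

variable [MeasurableSpace X] [BorelSpace X] (μ : Measure X) [IsFiniteMeasure μ]

theorem tendsto_measure_cone_diff :
    Tendsto (fun m : ℕ => μ (V.cone (1 / (m + 1)) \ V)) atTop (𝓝 0) := by
  have hempty : ⋂ m : ℕ, (V.cone (1 / (m + 1)) \ V) = ∅ := by
    refine eq_empty_iff_forall_notMem.2 fun x hx => ?_
    rw [mem_iInter] at hx
    refine (hx 0).2 (V.mem_of_forall_mem_cone fun ε hε => ?_)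
    obtain ⟨m, hm⟩ := exists_nat_one_div_lt hε
    exact V.cone_mono hm.le (hx m).1
  have hmeas (m : ℕ) : NullMeasurableSet (V.cone (1 / (m + 1)) \ V) μ :=
    ((V.isClosed_cone _).measurableSet.diff
      V.closed_of_finiteDimensional.measurableSet).nullMeasurableSet
  have hlim := tendsto_measure_iInter_atTop hmeas
    (fun m m' hm => sdiff_subset_sdiff_left (V.cone_mono (by gcongr))) ⟨0, measure_ne_top μ _⟩
  rwa [hempty, measure_empty] at hlim

theorem eventually_lt_measure_inter_of_subset_cone {c : ℝ≥0∞} {s : ℕ → Set X}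
    (hs : ∀ ε > 0, ∀ᶠ k in atTop, s k ⊆ V.cone ε)
    (hμ : ∀ b < c, ∀ᶠ k in atTop, b < μ (s k)) :
    ∀ b < c, ∀ᶠ k in atTop, b < μ (s k ∩ V) := by
  intro b hb
  obtain ⟨m, hm⟩ :=
    ((V.tendsto_measure_cone_diff μ).eventually_lt_const (tsub_pos_of_lt hb)).exists
  filter_upwards [hμ _ (lt_tsub_iff_left.1 hm), hs (1 / (m + 1)) (by positivity)] with k hk hsub
  have hsplit : μ (s k) ≤ μ (s k ∩ V) + μ (V.cone (1 / (m + 1)) \ V) :=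
    (measure_le_inter_add_sdiff μ (s k) V).trans (by gcongr)
  exact (ENNReal.add_lt_add_iff_right (measure_ne_top μ _)).1 (hk.trans_le hsplit)

theorem exists_measure_ge_frequently_le_of_finrank_eq {c : ℝ≥0∞} (d : ℕ) :
    ∀ F : ℕ → Submodule ℝ X, (∀ k, finrank ℝ (F k) = d) →
      (∀ b < c, ∀ᶠ k in atTop, b < μ (F k)) →
        ∃ W : Submodule ℝ X, c ≤ μ W ∧ ∃ᶠ k in atTop, W ≤ F k := by
  induction d using Nat.strong_induction_on with | _ d IH => ?_
  intro F hF hμF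
  obtain ⟨φ, hφ, V, hV, hcone⟩ := exists_strictMono_subset_cone F hF
  set G : ℕ → Submodule ℝ X := fun k => F (φ k) ⊓ V
  have hGF k : G k ≤ F (φ k) := inf_le_left
  have hμG : ∀ b < c, ∀ᶠ k in atTop, b < μ (G k) := by
    simpa [G] using V.eventually_lt_measure_inter_of_subset_cone μ hcone
      fun b hb => hφ.tendsto_atTop.eventually (hμF b hb)
  obtain ⟨ψ, hψ, d', hd'⟩ := exists_strictMono_finrank_eq G
  have hμGψ b (hb : b < c) := hψ.tendsto_atTop.eventually (hμG b hb)
  have hd'd : d' ≤ d := hd' 0 ▸ hV ▸ finrank_mono inf_le_right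
  rcases hd'd.lt_or_eq with hlt | rfl
  · obtain ⟨W, hW, hfreq⟩ := IH d' hlt (G ∘ ψ) hd' hμGψ
    exact ⟨W, hW, (hφ.comp hψ).tendsto_atTop.frequently
      (hfreq.mono fun k hk => hk.trans (hGF _))⟩
  · have hGV k : G (ψ k) = V := eq_of_le_of_finrank_eq inf_le_right (by rw [hd', hV])
    refine ⟨V, le_of_forall_lt fun b hb => ?_, (hφ.comp hψ).tendsto_atTop.frequently
      (Frequently.of_forall fun k => hGV k ▸ hGF _)⟩
    obtain ⟨k, hk⟩ := (hμGψ b hb).exists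
    rwa [hGV] at hk

theorem exists_measure_ge_frequently_le {c : ℝ≥0∞} (F : ℕ → Submodule ℝ X)
    (hμF : ∀ b < c, ∀ᶠ k in atTop, b < μ (F k)) :
    ∃ W : Submodule ℝ X, c ≤ μ W ∧ ∃ᶠ k in atTop, W ≤ F k := by
  obtain ⟨φ, hφ, d, hd⟩ := exists_strictMono_finrank_eq F
  obtain ⟨W, hW, hfreq⟩ := exists_measure_ge_frequently_le_of_finrank_eq μ d (F ∘ φ) hd
    fun b hb => hφ.tendsto_atTop.eventually (hμF b hb)
  exact ⟨W, hW, hφ.tendsto_atTop.frequently hfreq⟩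

end Submodule

theorem stmt16_general {n : ℕ} (a : ℝ)
    (μ : Measure (EuclideanSpace ℝ (Fin n))) [IsProbabilityMeasure μ] :
    {E : Submodule ℝ (EuclideanSpace ℝ (Fin n)) | IsBasic μ a E}.Finite := by
  by_contra hinf
  let E := Set.Infinite.natEmbedding _ hinf
  obtain ⟨W, hW, hfreq⟩ := Submodule.exists_measure_ge_frequently_le μ
    (fun k => (E k : Submodule ℝ _))
    fun b hb => Eventually.of_forall fun k => hb.trans_le (E k).2.1
  have hEW : ∃ᶠ k in atTop, (E k : Submodule ℝ _) = W := hfreq.mono fun k hk =>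
    (hk.lt_or_eq.resolve_left fun hlt => ((E k).2.2 W hlt).not_ge hW).symm
  refine Nat.frequently_atTop_iff_infinite.1 hEW (Set.Subsingleton.finite fun k hk l hl => ?_)
  exact E.injective (Subtype.ext (hk.trans hl.symm))

/-- For a Borel probability measure on `ℝⁿ` and `0 < a ≤ 1`, there are only finitely
many `a`-basic subspaces. -/
theorem stmt16 {n : ℕ} (hn : 1 ≤ n) (a : ℝ) (ha0 : 0 < a) (ha1 : a ≤ 1)
    (μ : Measure (EuclideanSpace ℝ (Fin n))) [IsProbabilityMeasure μ] :
    {E : Submodule ℝ (EuclideanSpace ℝ (Fin n)) | IsBasic μ a E}.Finite :=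
  stmt16_general a μ
end
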